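/- arXiv:2509.20933 — 8 statements merged into one kernel-verified Lean document; each statement's English description precedes it below -/
import Mathlib

section
/- For every dimension d ≥ 1 and every finite set 𝕃 of effects on ℂ^d, there exists a density operator ρ̂ on ℂ^d such that for all L, L' ∈ 𝕃, Matrix.trace (L * ρ̂) = Matrix.trace (L' * ρ̂) holds if and only if L = L'. -/
open Matrix ComplexOrder

/-- An effect on ℂ^d: a positive semidefinite matrix below the identity. -/
def IsEffect {d : ℕ} (L : Matrix (Fin d) (Fin d) ℂ) : Prop :=
  L.PosSemidef ∧ (1 - L).PosSemidef

/-- A density operator on ℂ^d: a positive semidefinite matrix of trace one. -/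
def IsDensity {d : ℕ} (ρ : Matrix (Fin d) (Fin d) ℂ) : Prop :=
  ρ.PosSemidef ∧ ρ.trace = 1

lemma smul_psd {d : ℕ} {A : Matrix (Fin d) (Fin d) ℂ} (hA : A.PosSemidef)
    {c : ℝ} (hc : 0 ≤ c) : ((c : ℂ) • A).PosSemidef := by
  constructor
  · unfold Matrix.IsHermitian
    rw [conjTranspose_smul, hA.1]
    simp
  · intro x
    have h := mul_nonneg (show (0:ℂ) ≤ (c:ℂ) by exact_mod_cast hc) (hA.2 x)
    convert h using 1
    simp only [Matrix.smul_apply, smul_eq_mul, Finsupp.mul_sum]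
    congr 1; ext i xi; congr 1; ext j xj; ring

lemma detect {d : ℕ} (M : Matrix (Fin d) (Fin d) ℂ) (hM : M.IsHermitian) (hne : M ≠ 0) :
    ∃ ρ : Matrix (Fin d) (Fin d) ℂ, ρ.PosSemidef ∧ ρ.trace = 1 ∧ (M * ρ).trace ≠ 0 := by
  have hev : ∃ i, hM.eigenvalues i ≠ 0 := by
    by_contra h
    push_neg at h
    apply hne
    have := hM.spectral_theorem
    rw [this]
    have : Matrix.diagonal (RCLike.ofReal ∘ hM.eigenvalues) = (0 : Matrix (Fin d) (Fin d) ℂ) := by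
      ext i j
      by_cases hij : i = j <;> simp [Matrix.diagonal, hij, h]
    rw [this]
    simp
  obtain ⟨i, hi⟩ := hev
  set v : Fin d → ℂ := ⇑(hM.eigenvectorBasis i) with hv
  refine ⟨Matrix.of (fun a b => v a * star (v b)), ?_, ?_, ?_⟩
  · have : Matrix.of (fun a b => v a * star (v b)) =
        (Matrix.of (fun (_ : Fin 1) b => star (v b)))ᴴ * (Matrix.of (fun (_ : Fin 1) b => star (v b))) := by
      ext a b
      simp [Matrix.mul_apply, mul_comm]
    rw [this]
    exact posSemidef_conjTranspose_mul_self _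
  · have hnorm : ∑ a, star (v a) * v a = 1 := by
      have := hM.eigenvectorBasis.orthonormal.1 i
      have h2 : (inner ℂ (hM.eigenvectorBasis i) (hM.eigenvectorBasis i) : ℂ) = 1 := by
        rw [inner_self_eq_norm_sq_to_K, this]; simp
      rw [← h2]
      rw [EuclideanSpace.inner_eq_star_dotProduct]
      simp [dotProduct, mul_comm]
      rfl
    unfold Matrix.trace
    simp only [Matrix.diag_apply, Matrix.of_apply]
    rw [← hnorm]
    exact Finset.sum_congr rfl (fun a _ => mul_comm _ _)
  · have hmv : M *ᵥ v = (hM.eigenvalues i : ℂ) • v := by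
      have := hM.mulVec_eigenvectorBasis i
      rw [this]
      ext a
      simp only [Pi.smul_apply, Complex.real_smul, smul_eq_mul]
      rfl
    have : (M * Matrix.of (fun a b => v a * star (v b))).trace = (hM.eigenvalues i : ℂ) := by
      unfold Matrix.trace
      simp only [Matrix.diag_apply, Matrix.mul_apply, Matrix.of_apply]
      have : ∀ a, ∑ b, M a b * (v b * star (v a)) = (hM.eigenvalues i : ℂ) * (v a * star (v a)) := by
        intro a
        have h1 : ∑ b, M a b * (v b * star (v a)) = (M *ᵥ v) a * star (v a) := by
          simp [Matrix.mulVec, dotProduct, Finset.sum_mul, mul_assoc]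
        rw [h1, hmv]
        simp [mul_assoc]
      rw [Finset.sum_congr rfl (fun a _ => this a), ← Finset.mul_sum]
      have hnorm : ∑ a, v a * star (v a) = 1 := by
        have := hM.eigenvectorBasis.orthonormal.1 i
        have h2 : (inner ℂ (hM.eigenvectorBasis i) (hM.eigenvectorBasis i) : ℂ) = 1 := by
          rw [inner_self_eq_norm_sq_to_K, this]; simp
        rw [← h2]
        rw [EuclideanSpace.inner_eq_star_dotProduct]
        simp [dotProduct, mul_comm]
        rfl
      rw [hnorm, mul_one]
    rw [this]
    exact_mod_cast hi

lemma many_detect {d : ℕ} (hd : 1 ≤ d) (S : Finset (Matrix (Fin d) (Fin d) ℂ))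
    (hS : ∀ M ∈ S, M.IsHermitian ∧ M ≠ 0) :
    ∃ ρ : Matrix (Fin d) (Fin d) ℂ, ρ.PosSemidef ∧ ρ.trace = 1 ∧
      ∀ M ∈ S, (M * ρ).trace ≠ 0 := by
  classical
  induction S using Finset.induction_on with
  | empty =>
    refine ⟨(((d : ℝ)⁻¹ : ℝ) : ℂ) • 1, smul_psd Matrix.PosSemidef.one (by positivity), ?_, by simp⟩
    rw [Matrix.trace_smul, Matrix.trace_one]
    have hd0 : (d : ℝ) ≠ 0 := by positivity
    simp only [smul_eq_mul]
    push_cast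
    field_simp
    simp
  | @insert M S' hMS ih =>
    obtain ⟨ρ, hρ1, hρ2, hρ3⟩ := ih (fun N hN => hS N (Finset.mem_insert_of_mem hN))
    obtain ⟨σ, hσ1, hσ2, hσ3⟩ := detect M (hS M (Finset.mem_insert_self M S')).1
      (hS M (Finset.mem_insert_self M S')).2
    -- bad parameter sets
    set g : Matrix (Fin d) (Fin d) ℂ → ℝ → ℂ :=
      fun N t => (1 - (t : ℂ)) * (N * ρ).trace + (t : ℂ) * (N * σ).trace with hg
    have hfin : ∀ N ∈ insert M S', {t : ℝ | g N t = 0}.Finite := by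
      intro N hN
      have hkey : g N 0 ≠ 0 ∨ g N 1 ≠ 0 := by
        rcases Finset.mem_insert.mp hN with rfl | h
        · right; simpa [hg] using hσ3
        · left; simpa [hg] using hρ3 N h
      set a := (N * ρ).trace
      set b := (N * σ).trace - (N * ρ).trace with hb
      have hgab : ∀ t : ℝ, g N t = a + (t : ℂ) * b := by
        intro t; simp only [hg, hb]; ring
      by_cases hb0 : b = 0
      · have : {t : ℝ | g N t = 0} = ∅ := by
          ext t
          simp only [Set.mem_setOf_eq, Set.mem_empty_iff_false, iff_false]
          rw [hgab t, hb0, mul_zero, add_zero]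
          rcases hkey with h | h
          · rwa [hgab 0, hb0, mul_zero, add_zero] at h
          · rwa [hgab 1, hb0, mul_zero, add_zero] at h
        rw [this]; exact Set.finite_empty
      · apply Set.Subsingleton.finite
        intro s hs t ht
        simp only [Set.mem_setOf_eq, hgab] at hs ht
        have : (s : ℂ) = (t : ℂ) := by
          have h1 : ((s : ℂ) - (t : ℂ)) * b = 0 := by linear_combination hs - ht
          rcases mul_eq_zero.mp h1 with h | h
          · exact sub_eq_zero.mp h
          · exact absurd h hb0
        exact_mod_cast this
    have hbad : (⋃ N ∈ (insert M S' : Finset _), {t : ℝ | g N t = 0}).Finite :=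
      Set.Finite.biUnion (Finset.finite_toSet _) (fun N hN => hfin N hN)
    have hicc : (Set.Icc (0:ℝ) 1).Infinite := Set.Icc_infinite (by norm_num)
    obtain ⟨t, ht⟩ := (hicc.diff hbad).nonempty
    obtain ⟨⟨ht0, ht1⟩, htbad⟩ := ht
    refine ⟨((1 - t : ℝ) : ℂ) • ρ + ((t : ℝ) : ℂ) • σ, ?_, ?_, ?_⟩
    · exact (smul_psd hρ1 (by linarith)).add (smul_psd hσ1 ht0)
    · rw [Matrix.trace_add, Matrix.trace_smul, Matrix.trace_smul, hρ2, hσ2]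
      simp only [smul_eq_mul]; push_cast; ring
    · intro N hN
      have : (N * (((1 - t : ℝ) : ℂ) • ρ + ((t : ℝ) : ℂ) • σ)).trace = g N t := by
        rw [mul_add, Matrix.trace_add, mul_smul_comm, mul_smul_comm,
          Matrix.trace_smul, Matrix.trace_smul]
        simp only [hg, smul_eq_mul]
        push_cast; ring
      rw [this]
      intro h0
      exact htbad (Set.mem_biUnion hN h0)

theorem stmt0 (d : ℕ) (hd : 1 ≤ d) (𝕃 : Finset (Matrix (Fin d) (Fin d) ℂ))
    (h𝕃 : ∀ L ∈ 𝕃, IsEffect L) :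
    ∃ ρ : Matrix (Fin d) (Fin d) ℂ, IsDensity ρ ∧
      ∀ L ∈ 𝕃, ∀ L' ∈ 𝕃, ((L * ρ).trace = (L' * ρ).trace ↔ L = L') := by
  classical
  set S : Finset (Matrix (Fin d) (Fin d) ℂ) :=
    ((𝕃 ×ˢ 𝕃).filter (fun p => p.1 ≠ p.2)).image (fun p => p.1 - p.2) with hSdef
  have hS : ∀ M ∈ S, M.IsHermitian ∧ M ≠ 0 := by
    intro M hM
    simp only [hSdef, Finset.mem_image, Finset.mem_filter, Finset.mem_product] at hM
    obtain ⟨⟨L, L'⟩, ⟨⟨hL, hL'⟩, hne⟩, rfl⟩ := hM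
    exact ⟨((h𝕃 L hL).1.1).sub ((h𝕃 L' hL').1.1), sub_ne_zero.mpr hne⟩
  obtain ⟨ρ, h1, h2, h3⟩ := many_detect hd S hS
  refine ⟨ρ, ⟨h1, h2⟩, ?_⟩
  intro L hL L' hL'
  constructor
  · intro htr
    by_contra hne
    have hmem : L - L' ∈ S := by
      simp only [hSdef, Finset.mem_image, Finset.mem_filter, Finset.mem_product]
      exact ⟨(L, L'), ⟨⟨hL, hL'⟩, hne⟩, rfl⟩
    apply h3 _ hmem
    rw [Matrix.sub_mul, Matrix.trace_sub, htr, sub_self]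
  · rintro rfl; rfl
end

section
/- For every d ≥ 2 there exist effects a, b, c, e on ℂ^d with a + b = c + e such that there are no positive semidefinite matrices e₁₁, e₁₂, e₂₁, e₂₂ : Matrix (Fin d) (Fin d) ℂ satisfying a = e₁₁ + e₁₂, b = e₂₁ + e₂₂, c = e₁₁ + e₂₁ and e = e₁₂ + e₂₂. (In other words, the effect algebra of quantum effects on ℂ^d is not decomposable when d ≥ 2.) -/
open Matrix ComplexOrder

lemma outer_posSemidef {d : ℕ} (v : Fin d → ℂ) :
    (vecMulVec v (star v)).PosSemidef := by
  refine posSemidef_iff_dotProduct_mulVec.mpr ⟨?_, ?_⟩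
  · ext i j
    simp [vecMulVec, conjTranspose_apply, mul_comm]
  · intro x
    have hs : star x ⬝ᵥ v = star (star v ⬝ᵥ x) := by
      simp [dotProduct, star_sum, mul_comm]
    have h1 : star x ⬝ᵥ (vecMulVec v (star v)) *ᵥ x
        = star (star v ⬝ᵥ x) * (star v ⬝ᵥ x) := by
      rw [← hs]
      simp only [mulVec, dotProduct, vecMulVec_apply, Pi.star_apply, Finset.sum_mul,
        Finset.mul_sum]
      rw [Finset.sum_comm]
      refine Finset.sum_congr rfl fun i _ => Finset.sum_congr rfl fun j _ => by ring
    rw [h1]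
    exact star_mul_self_nonneg _

lemma diag_nonneg' {d : ℕ} {M : Matrix (Fin d) (Fin d) ℂ} (hM : M.PosSemidef) (i : Fin d) :
    0 ≤ M i i := by
  have := hM.dotProduct_mulVec_nonneg (Pi.single i 1)
  simpa [mulVec, dotProduct, Pi.single_apply] using this

lemma entry_zero_of_diag_zero {d : ℕ} {M : Matrix (Fin d) (Fin d) ℂ} (hM : M.PosSemidef)
    {j : Fin d} (hj : M j j = 0) (i : Fin d) : M i j = 0 := by
  obtain ⟨B, rfl⟩ : ∃ B : Matrix (Fin d) (Fin d) ℂ, M = Bᴴ * B := by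
    open scoped MatrixOrder in
    exact CStarAlgebra.nonneg_iff_eq_star_mul_self.mp hM.nonneg
  have hB : ∀ k, B k j = 0 := by
    intro k
    have h0 : ∑ k, star (B k j) * B k j = 0 := by
      simpa [Matrix.mul_apply, conjTranspose_apply] using hj
    have := (Finset.sum_eq_zero_iff_of_nonneg
      (fun k _ => star_mul_self_nonneg (B k j))).mp h0 k (Finset.mem_univ k)
    rw [Complex.star_def, ← Complex.normSq_eq_conj_mul_self] at this
    exact_mod_cast Complex.normSq_eq_zero.mp (by exact_mod_cast this)
  simp [Matrix.mul_apply, hB]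

lemma Dpsd {d : ℕ} (i0 i1 : Fin d) :
    (diagonal (fun i => if i = i0 then 0 else if i = i1 then 0 else (1:ℂ))).PosSemidef := by
  refine posSemidef_diagonal_iff.mpr fun i => ?_
  by_cases h : i = i0 <;> by_cases h' : i = i1 <;> simp [h, h']

lemma h1a_lemma {d : ℕ} (i0 i1 : Fin d) (hne : i0 ≠ i1) :
    (1 : Matrix (Fin d) (Fin d) ℂ)
      - vecMulVec (fun i => if i = i0 then 1 else 0)
          (star (fun i => if i = i0 then 1 else (0:ℂ)))
     = vecMulVec (fun i => if i = i1 then 1 else 0)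
          (star (fun i => if i = i1 then 1 else (0:ℂ)))
       + diagonal (fun i => if i = i0 then 0 else if i = i1 then 0 else 1) := by
  ext i j
  simp only [Matrix.sub_apply, one_apply, Matrix.add_apply, vecMulVec_apply, Pi.star_apply, diagonal_apply]
  by_cases hij : i = j <;> by_cases h0 : i = i0 <;> by_cases h1 : i = i1 <;>
    by_cases hj0 : j = i0 <;> by_cases hj1 : j = i1 <;> simp_all

lemma h1b_lemma {d : ℕ} (i0 i1 : Fin d) (hne : i0 ≠ i1) :
    (1 : Matrix (Fin d) (Fin d) ℂ)
      - vecMulVec (fun i => if i = i1 then 1 else 0)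
          (star (fun i => if i = i1 then 1 else (0:ℂ)))
     = vecMulVec (fun i => if i = i0 then 1 else 0)
          (star (fun i => if i = i0 then 1 else (0:ℂ)))
       + diagonal (fun i => if i = i0 then 0 else if i = i1 then 0 else 1) := by
  ext i j
  simp only [Matrix.sub_apply, one_apply, Matrix.add_apply, vecMulVec_apply, Pi.star_apply, diagonal_apply]
  by_cases hij : i = j <;> by_cases h0 : i = i0 <;> by_cases h1 : i = i1 <;>
    by_cases hj0 : j = i0 <;> by_cases hj1 : j = i1 <;> simp_all

lemma h1c_lemma {d : ℕ} (i0 i1 : Fin d) (hne : i0 ≠ i1) (r : ℂ)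
    (hrstar : star r = r) (hrr : r * r = 1/2) :
    (1 : Matrix (Fin d) (Fin d) ℂ)
      - vecMulVec (fun i => if i = i0 then r else if i = i1 then r else 0)
          (star (fun i => if i = i0 then r else if i = i1 then r else 0))
     = vecMulVec (fun i => if i = i0 then r else if i = i1 then -r else 0)
          (star (fun i => if i = i0 then r else if i = i1 then -r else 0))
       + diagonal (fun i => if i = i0 then 0 else if i = i1 then 0 else 1) := by
  ext i j
  simp only [Matrix.sub_apply, one_apply, Matrix.add_apply, vecMulVec_apply, Pi.star_apply, diagonal_apply]
  by_cases hij : i = j <;> by_cases h0 : i = i0 <;> by_cases h1 : i = i1 <;>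
    by_cases hj0 : j = i0 <;> by_cases hj1 : j = i1 <;> simp_all [hrstar] <;> norm_num

lemma h1e_lemma {d : ℕ} (i0 i1 : Fin d) (hne : i0 ≠ i1) (r : ℂ)
    (hrstar : star r = r) (hrr : r * r = 1/2) :
    (1 : Matrix (Fin d) (Fin d) ℂ)
      - vecMulVec (fun i => if i = i0 then r else if i = i1 then -r else 0)
          (star (fun i => if i = i0 then r else if i = i1 then -r else 0))
     = vecMulVec (fun i => if i = i0 then r else if i = i1 then r else 0)
          (star (fun i => if i = i0 then r else if i = i1 then r else 0))
       + diagonal (fun i => if i = i0 then 0 else if i = i1 then 0 else 1) := by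
  ext i j
  simp only [Matrix.sub_apply, one_apply, Matrix.add_apply, vecMulVec_apply, Pi.star_apply, diagonal_apply]
  by_cases hij : i = j <;> by_cases h0 : i = i0 <;> by_cases h1 : i = i1 <;>
    by_cases hj0 : j = i0 <;> by_cases hj1 : j = i1 <;> simp_all [hrstar] <;> norm_num

lemma hsum_lemma {d : ℕ} (i0 i1 : Fin d) (hne : i0 ≠ i1) (r : ℂ)
    (hrstar : star r = r) (hrr : r * r = 1/2) :
    vecMulVec (fun i => if i = i0 then 1 else 0)
          (star (fun i => if i = i0 then 1 else (0:ℂ)))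
      + vecMulVec (fun i => if i = i1 then 1 else 0)
          (star (fun i => if i = i1 then 1 else (0:ℂ)))
     = vecMulVec (fun i => if i = i0 then r else if i = i1 then r else 0)
          (star (fun i => if i = i0 then r else if i = i1 then r else 0))
      + vecMulVec (fun i => if i = i0 then r else if i = i1 then -r else 0)
          (star (fun i => if i = i0 then r else if i = i1 then -r else 0)) := by
  ext i j
  simp only [Matrix.add_apply, vecMulVec_apply, Pi.star_apply]
  by_cases h0 : i = i0 <;> by_cases h1 : i = i1 <;>
    by_cases hj0 : j = i0 <;> by_cases hj1 : j = i1 <;>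
    simp_all [hrstar] <;> norm_num

theorem stmt1 (d : ℕ) (hd : 2 ≤ d) :
    ∃ a b c e : Matrix (Fin d) (Fin d) ℂ,
      IsEffect a ∧ IsEffect b ∧ IsEffect c ∧ IsEffect e ∧ a + b = c + e ∧
      ¬ ∃ e₁₁ e₁₂ e₂₁ e₂₂ : Matrix (Fin d) (Fin d) ℂ,
          e₁₁.PosSemidef ∧ e₁₂.PosSemidef ∧ e₂₁.PosSemidef ∧ e₂₂.PosSemidef ∧
          a = e₁₁ + e₁₂ ∧ b = e₂₁ + e₂₂ ∧ c = e₁₁ + e₂₁ ∧ e = e₁₂ + e₂₂ := by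
  have hd0 : 0 < d := by omega
  have hd1 : 1 < d := by omega
  refine ?_
  let i0 : Fin d := ⟨0, hd0⟩
  let i1 : Fin d := ⟨1, hd1⟩
  have hne : i0 ≠ i1 := by simp [i0, i1, Fin.ext_iff]
  let r : ℂ := (((Real.sqrt 2)⁻¹ : ℝ) : ℂ)
  have hrstar : star r = r := by simp [r, Complex.star_def, Complex.conj_ofReal]
  have hrr : r * r = 1/2 := by
    show (((Real.sqrt 2)⁻¹ : ℝ) : ℂ) * (((Real.sqrt 2)⁻¹ : ℝ) : ℂ) = 1/2
    rw [← Complex.ofReal_mul, ← mul_inv, Real.mul_self_sqrt (by norm_num)]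
    norm_num
  have effa : IsEffect (vecMulVec (fun i => if i = i0 then 1 else 0)
      (star (fun i => if i = i0 then 1 else (0:ℂ)))) := by
    refine ⟨outer_posSemidef _, ?_⟩
    rw [h1a_lemma i0 i1 hne]
    exact (outer_posSemidef _).add (Dpsd i0 i1)
  have effb : IsEffect (vecMulVec (fun i => if i = i1 then 1 else 0)
      (star (fun i => if i = i1 then 1 else (0:ℂ)))) := by
    refine ⟨outer_posSemidef _, ?_⟩
    rw [h1b_lemma i0 i1 hne]
    exact (outer_posSemidef _).add (Dpsd i0 i1)
  have effc : IsEffect (vecMulVec (fun i => if i = i0 then r else if i = i1 then r else 0)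
      (star (fun i => if i = i0 then r else if i = i1 then r else 0))) := by
    refine ⟨outer_posSemidef _, ?_⟩
    rw [h1c_lemma i0 i1 hne r hrstar hrr]
    exact (outer_posSemidef _).add (Dpsd i0 i1)
  have effe : IsEffect (vecMulVec (fun i => if i = i0 then r else if i = i1 then -r else 0)
      (star (fun i => if i = i0 then r else if i = i1 then -r else 0))) := by
    refine ⟨outer_posSemidef _, ?_⟩
    rw [h1e_lemma i0 i1 hne r hrstar hrr]
    exact (outer_posSemidef _).add (Dpsd i0 i1)
  refine ⟨_, _, _, _, effa, effb, effc, effe, hsum_lemma i0 i1 hne r hrstar hrr, ?_⟩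
  rintro ⟨e11, e12, e21, e22, p11, p12, p21, p22, ha, hb, hc, he⟩
  have ha11 : e11 i1 i1 + e12 i1 i1 = 0 := by
    have := congr_fun (congr_fun ha i1) i1
    simp only [vecMulVec_apply, Pi.star_apply, Matrix.add_apply] at this
    rw [if_neg (Ne.symm hne)] at this
    simpa using this.symm
  have he11d : e11 i1 i1 = 0 := by
    have h1 := diag_nonneg' p11 i1
    have h2 := diag_nonneg' p12 i1
    have hle : e11 i1 i1 ≤ 0 := by
      calc e11 i1 i1 ≤ e11 i1 i1 + e12 i1 i1 := le_add_of_nonneg_right h2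
      _ = 0 := ha11
    exact le_antisymm hle h1
  have he11 : e11 i0 i1 = 0 := entry_zero_of_diag_zero p11 he11d i0
  have hb00 : e21 i0 i0 + e22 i0 i0 = 0 := by
    have := congr_fun (congr_fun hb i0) i0
    simp only [vecMulVec_apply, Pi.star_apply, Matrix.add_apply] at this
    rw [if_neg hne] at this
    simpa using this.symm
  have he21d : e21 i0 i0 = 0 := by
    have h1 := diag_nonneg' p21 i0
    have h2 := diag_nonneg' p22 i0
    have hle : e21 i0 i0 ≤ 0 := by
      calc e21 i0 i0 ≤ e21 i0 i0 + e22 i0 i0 := le_add_of_nonneg_right h2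
      _ = 0 := hb00
    exact le_antisymm hle h1
  have he21' : e21 i1 i0 = 0 := entry_zero_of_diag_zero p21 he21d i1
  have he21 : e21 i0 i1 = 0 := by
    have hh := congr_fun (congr_fun p21.1 i0) i1
    rw [conjTranspose_apply] at hh
    rw [← hh, he21', star_zero]
  have hc01 : (vecMulVec (fun i => if i = i0 then r else if i = i1 then r else 0)
      (star (fun i => if i = i0 then r else if i = i1 then r else 0))) i0 i1 = 1/2 := by
    simp [vecMulVec_apply, Ne.symm hne, hrstar, hrr]
  have := congr_fun (congr_fun hc i0) i1
  rw [hc01, Matrix.add_apply, he11, he21] at this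
  norm_num at this
end

section
/- For every d ≥ 1, the map sending an effect L on ℂ^d to the function ρ ↦ Re (Matrix.trace (L * ρ)) on density operators is a bijection from the set of effects on ℂ^d onto the set of functions f from density operators on ℂ^d to ℝ satisfying: (i) 0 ≤ f ρ ≤ 1 for every density operator ρ, and (ii) f (p • ρ + (1 - p) • σ) = p * f ρ + (1 - p) * f σ for all density operators ρ, σ and every real p ∈ [0, 1] (convexity). -/
open Matrix ComplexOrder

/-- The type of density operators on ℂ^d. -/
def DOp (d : ℕ) := {ρ : Matrix (Fin d) (Fin d) ℂ // IsDensity ρ}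

namespace BornAux

variable {d : ℕ}

lemma psd_smul {A : Matrix (Fin d) (Fin d) ℂ} (hA : A.PosSemidef) {c : ℝ} (hc : 0 ≤ c) :
    (c • A).PosSemidef := by
  rw [posSemidef_iff_dotProduct_mulVec]
  constructor
  · unfold Matrix.IsHermitian
    rw [conjTranspose_smul, hA.1]
    norm_num
  · intro x
    rw [smul_mulVec, dotProduct_smul]
    have h0 : (0:ℂ) ≤ (c:ℂ) := by rw [Complex.zero_le_real]; exact hc
    calc (0:ℂ) = (c:ℂ) * 0 := by ring
    _ ≤ (c:ℂ) * (star x ⬝ᵥ A *ᵥ x) := mul_le_mul_of_nonneg_left (hA.dotProduct_mulVec_nonneg x) h0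
    _ = c • (star x ⬝ᵥ A *ᵥ x) := by rw [Complex.real_smul]

lemma psd_diag_nonneg {A : Matrix (Fin d) (Fin d) ℂ} (hA : A.PosSemidef) (i : Fin d) :
    0 ≤ A i i := by
  have h := hA.dotProduct_mulVec_nonneg (Pi.single i 1)
  simpa [dotProduct, Pi.single_apply] using h

lemma psd_trace_nonneg {A : Matrix (Fin d) (Fin d) ℂ} (hA : A.PosSemidef) :
    0 ≤ A.trace :=
  Finset.sum_nonneg fun i _ => psd_diag_nonneg hA i

lemma psd_trace_real {A : Matrix (Fin d) (Fin d) ℂ} (hA : A.PosSemidef) :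
    A.trace = (A.trace.re : ℂ) := by
  have h := psd_trace_nonneg hA
  rw [Complex.nonneg_iff] at h
  exact Complex.ext rfl (by simpa using h.2.symm)

lemma psd_trace_re_nonneg {A : Matrix (Fin d) (Fin d) ℂ} (hA : A.PosSemidef) :
    0 ≤ A.trace.re := by
  have h := psd_trace_nonneg hA
  rw [Complex.nonneg_iff] at h
  exact h.1

lemma psd_eq_zero_of_trace {A : Matrix (Fin d) (Fin d) ℂ} (hA : A.PosSemidef)
    (h : A.trace.re = 0) : A = 0 := by
  have htr : A.trace = 0 := by rw [psd_trace_real hA, h]; simp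
  obtain ⟨B, rfl⟩ : ∃ B : Matrix (Fin d) (Fin d) ℂ, A = Bᴴ * B := by
    open scoped MatrixOrder in exact CStarAlgebra.nonneg_iff_eq_star_mul_self.mp hA.nonneg
  have hdiag := (Finset.sum_eq_zero_iff_of_nonneg
    (fun i _ => psd_diag_nonneg hA i)).mp htr
  have hB : B = 0 := by
    ext j i
    have h0 : (Bᴴ * B) i i = 0 := hdiag i (Finset.mem_univ i)
    have h1 : star (fun k => B k i) ⬝ᵥ (fun k => B k i) = 0 := by
      simpa [mul_apply, dotProduct, conjTranspose_apply] using h0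
    exact congrFun (dotProduct_star_self_eq_zero.mp h1) j
  rw [hB]; simp

lemma trace_mul_col_row (A : Matrix (Fin d) (Fin d) ℂ) (x : Fin d → ℂ) :
    (A * (replicateCol (Fin 1) x * (replicateCol (Fin 1) x)ᴴ)).trace = star x ⬝ᵥ A *ᵥ x := by
  simp only [trace, diag, mul_apply, dotProduct, mulVec, conjTranspose_apply, replicateCol_apply,
    Pi.star_apply, Finset.mul_sum, Finset.sum_mul]
  apply Finset.sum_congr rfl
  intro i _
  apply Finset.sum_congr rfl
  intro j _
  simp only [Finset.sum_const, Finset.card_univ, Fintype.card_fin, one_smul]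
  ring

lemma herm_decomp {A : Matrix (Fin d) (Fin d) ℂ} (hA : A.IsHermitian) :
    ∃ P N : Matrix (Fin d) (Fin d) ℂ, P.PosSemidef ∧ N.PosSemidef ∧ A = P - N := by
  classical
  set U : Matrix (Fin d) (Fin d) ℂ := (hA.eigenvectorUnitary : Matrix (Fin d) (Fin d) ℂ)
  refine ⟨U * diagonal (fun i => ((max (hA.eigenvalues i) 0 : ℝ) : ℂ)) * Uᴴ,
          U * diagonal (fun i => ((max (-hA.eigenvalues i) 0 : ℝ) : ℂ)) * Uᴴ, ?_, ?_, ?_⟩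
  · refine PosSemidef.mul_mul_conjTranspose_same ?_ U
    refine posSemidef_diagonal_iff.mpr fun i => ?_
    rw [Complex.zero_le_real]
    exact le_max_right _ _
  · refine PosSemidef.mul_mul_conjTranspose_same ?_ U
    refine posSemidef_diagonal_iff.mpr fun i => ?_
    rw [Complex.zero_le_real]
    exact le_max_right _ _
  · have hspec := hA.spectral_theorem
    rw [Unitary.conjStarAlgAut_apply] at hspec
    rw [← sub_mul, ← mul_sub, diagonal_sub]
    have hfun : (fun i => (((max (hA.eigenvalues i) 0 : ℝ) : ℂ) - ((max (-hA.eigenvalues i) 0 : ℝ) : ℂ)))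
        = (RCLike.ofReal ∘ hA.eigenvalues) := by
      funext i
      rw [← Complex.ofReal_sub]
      have h2 : max (hA.eigenvalues i) 0 - max (-hA.eigenvalues i) 0 = hA.eigenvalues i := by
        rcases le_total (hA.eigenvalues i) 0 with h | h
        · rw [max_eq_right h, max_eq_left (by linarith)]; ring
        · rw [max_eq_left h, max_eq_right (by linarith)]; ring
      rw [h2]; rfl
    rw [hfun]
    convert hspec using 2
    rfl

/-- default density -/
lemma isDensity_default (hd : 1 ≤ d) :
    IsDensity ((d:ℝ)⁻¹ • (1 : Matrix (Fin d) (Fin d) ℂ)) := by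
  have hd0 : (d:ℝ) ≠ 0 := by positivity
  constructor
  · exact psd_smul Matrix.PosSemidef.one (by positivity)
  · rw [trace_smul, trace_one, Fintype.card_fin]
    rw [Complex.real_smul]
    push_cast
    field_simp

variable (hd : 1 ≤ d) (f : DOp d → ℝ)

open scoped Classical

/-- normalization of a PSD matrix to a density operator -/
noncomputable def dens (A : Matrix (Fin d) (Fin d) ℂ) : DOp d :=
  if h : IsDensity ((A.trace.re)⁻¹ • A) then ⟨_, h⟩ else ⟨_, isDensity_default hd⟩

lemma isDensity_inv_smul {A : Matrix (Fin d) (Fin d) ℂ} (hA : A.PosSemidef)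
    (h : A.trace.re ≠ 0) : IsDensity ((A.trace.re)⁻¹ • A) := by
  have hpos : 0 < A.trace.re := lt_of_le_of_ne (psd_trace_re_nonneg hA) (Ne.symm h)
  refine ⟨psd_smul hA (by positivity), ?_⟩
  set r := A.trace.re with hr
  rw [trace_smul, Complex.real_smul, psd_trace_real hA, ← hr, ← Complex.ofReal_mul,
    inv_mul_cancel₀ h]
  norm_num

lemma dens_spec {A : Matrix (Fin d) (Fin d) ℂ} (hA : A.PosSemidef)
    (h : A.trace.re ≠ 0) : (dens hd A).1 = (A.trace.re)⁻¹ • A := by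
  rw [dens]
  simp [isDensity_inv_smul hA h]

/-- the unnormalized value functional -/
noncomputable def Fv (A : Matrix (Fin d) (Fin d) ℂ) : ℝ :=
  A.trace.re * f (dens hd A)

/-- convexity hypothesis -/
def Cvx : Prop :=
  ∀ (ρ σ : DOp d) (p : ℝ), 0 ≤ p → p ≤ 1 →
    ∀ h : IsDensity (p • ρ.1 + (1 - p) • σ.1),
      f ⟨p • ρ.1 + (1 - p) • σ.1, h⟩ = p * f ρ + (1 - p) * f σ

lemma Fv_zero : Fv hd f 0 = 0 := by simp [Fv]

lemma Fv_of_density (ρ : DOp d) : Fv hd f ρ.1 = f ρ := by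
  have h1 : ρ.1.trace.re = 1 := by rw [ρ.2.2]; simp
  have : (dens hd ρ.1) = ρ := by
    apply Subtype.ext
    rw [dens_spec hd ρ.2.1 (by rw [h1]; norm_num), h1]
    simp
  rw [Fv, h1, this, one_mul]

lemma Fv_nonneg (hf0 : ∀ ρ : DOp d, 0 ≤ f ρ) {A : Matrix (Fin d) (Fin d) ℂ}
    (hA : A.PosSemidef) : 0 ≤ Fv hd f A :=
  mul_nonneg (psd_trace_re_nonneg hA) (hf0 _)

lemma Fv_le_trace (hf1 : ∀ ρ : DOp d, f ρ ≤ 1) {A : Matrix (Fin d) (Fin d) ℂ}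
    (hA : A.PosSemidef) : Fv hd f A ≤ A.trace.re := by
  calc Fv hd f A ≤ A.trace.re * 1 :=
        mul_le_mul_of_nonneg_left (hf1 _) (psd_trace_re_nonneg hA)
  _ = A.trace.re := mul_one _

lemma Fv_add (hf : Cvx f) {A B : Matrix (Fin d) (Fin d) ℂ}
    (hA : A.PosSemidef) (hB : B.PosSemidef) :
    Fv hd f (A + B) = Fv hd f A + Fv hd f B := by
  by_cases ha : A.trace.re = 0
  · rw [psd_eq_zero_of_trace hA ha]
    simp [Fv, ha]
  by_cases hb : B.trace.re = 0
  · rw [psd_eq_zero_of_trace hB hb]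
    simp [Fv, hb]
  have hapos : 0 < A.trace.re := lt_of_le_of_ne (psd_trace_re_nonneg hA) (Ne.symm ha)
  have hbpos : 0 < B.trace.re := lt_of_le_of_ne (psd_trace_re_nonneg hB) (Ne.symm hb)
  set a := A.trace.re with h_a
  set b := B.trace.re with h_b
  have htr : (A + B).trace.re = a + b := by rw [trace_add, Complex.add_re]
  set p := a / (a + b) with hp
  have hab : 0 < a + b := by linarith
  have hp0 : 0 ≤ p := by positivity
  have hp1 : p ≤ 1 := by rw [hp, div_le_one hab]; linarith
  have hq : 1 - p = b / (a + b) := by rw [hp]; field_simp; ring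
  have hcombo : p • (dens hd A).1 + (1 - p) • (dens hd B).1 = (a + b)⁻¹ • (A + B) := by
    rw [dens_spec hd hA ha, dens_spec hd hB hb, ← h_a, ← h_b, smul_smul, smul_smul, smul_add]
    congr 2
    · rw [hp]; field_simp
    · rw [hq]; field_simp
  have hden : IsDensity (p • (dens hd A).1 + (1 - p) • (dens hd B).1) := by
    rw [hcombo, ← htr]
    exact isDensity_inv_smul (hA.add hB) (by rw [htr]; exact ne_of_gt hab)
  have hcv := hf (dens hd A) (dens hd B) p hp0 hp1 hden
  have hsub : (⟨_, hden⟩ : DOp d) = dens hd (A + B) := by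
    apply Subtype.ext
    rw [dens_spec hd (hA.add hB) (by rw [htr]; exact ne_of_gt hab), htr]
    exact hcombo
  rw [Fv, htr, ← hsub, hcv, Fv, Fv, ← h_a, ← h_b, hq, hp]
  field_simp

lemma Fv_smul_nonneg (hf : Cvx f) {c : ℝ} (hc : 0 ≤ c) {A : Matrix (Fin d) (Fin d) ℂ}
    (hA : A.PosSemidef) : Fv hd f (c • A) = c * Fv hd f A := by
  by_cases hc0 : c = 0
  · simp [Fv, hc0]
  by_cases ha : A.trace.re = 0
  · rw [psd_eq_zero_of_trace hA ha]
    simp [Fv]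
  have hcpos : 0 < c := lt_of_le_of_ne hc (Ne.symm hc0)
  have hapos : 0 < A.trace.re := lt_of_le_of_ne (psd_trace_re_nonneg hA) (Ne.symm ha)
  have htr : (c • A).trace.re = c * A.trace.re := by
    rw [trace_smul, Complex.real_smul, Complex.mul_re]
    simp
  have hdens : dens hd (c • A) = dens hd A := by
    apply Subtype.ext
    rw [dens_spec hd (psd_smul hA hc) (by rw [htr]; positivity), dens_spec hd hA ha,
      htr, smul_smul]
    congr 1
    field_simp
  rw [Fv, Fv, htr, hdens]
  ring

/-- Hermitian part of a matrix. -/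
noncomputable def hermPart (A : Matrix (Fin d) (Fin d) ℂ) : Matrix (Fin d) (Fin d) ℂ :=
  (2⁻¹ : ℝ) • (A + Aᴴ)

lemma hermPart_isHermitian (A : Matrix (Fin d) (Fin d) ℂ) : (hermPart A).IsHermitian := by
  unfold hermPart Matrix.IsHermitian
  rw [conjTranspose_smul, conjTranspose_add, conjTranspose_conjTranspose]
  norm_num
  rw [add_comm]

lemma hermPart_of_isHermitian {A : Matrix (Fin d) (Fin d) ℂ} (hA : A.IsHermitian) :
    hermPart A = A := by
  unfold hermPart
  rw [hA.eq, ← two_smul ℝ A, smul_smul]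
  norm_num

lemma hermPart_add (A B : Matrix (Fin d) (Fin d) ℂ) :
    hermPart (A + B) = hermPart A + hermPart B := by
  unfold hermPart
  rw [conjTranspose_add, ← smul_add]
  congr 1
  abel

lemma hermPart_smul (r : ℝ) (A : Matrix (Fin d) (Fin d) ℂ) :
    hermPart (r • A) = r • hermPart A := by
  unfold hermPart
  rw [conjTranspose_smul, smul_comm]
  norm_num

noncomputable def posPart (A : Matrix (Fin d) (Fin d) ℂ) : Matrix (Fin d) (Fin d) ℂ :=
  (herm_decomp (hermPart_isHermitian A)).choose

noncomputable def negPart (A : Matrix (Fin d) (Fin d) ℂ) : Matrix (Fin d) (Fin d) ℂ :=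
  (herm_decomp (hermPart_isHermitian A)).choose_spec.choose

lemma posPart_psd (A : Matrix (Fin d) (Fin d) ℂ) : (posPart A).PosSemidef :=
  (herm_decomp (hermPart_isHermitian A)).choose_spec.choose_spec.1

lemma negPart_psd (A : Matrix (Fin d) (Fin d) ℂ) : (negPart A).PosSemidef :=
  (herm_decomp (hermPart_isHermitian A)).choose_spec.choose_spec.2.1

lemma hermPart_eq_parts (A : Matrix (Fin d) (Fin d) ℂ) :
    hermPart A = posPart A - negPart A :=
  (herm_decomp (hermPart_isHermitian A)).choose_spec.choose_spec.2.2

/-- the extended linear functional -/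
noncomputable def Lam (A : Matrix (Fin d) (Fin d) ℂ) : ℝ :=
  Fv hd f (posPart A) - Fv hd f (negPart A)

lemma Fv_sub_indep (hf : Cvx f) {P N P' N' : Matrix (Fin d) (Fin d) ℂ}
    (hP : P.PosSemidef) (hN : N.PosSemidef) (hP' : P'.PosSemidef) (hN' : N'.PosSemidef)
    (h : P - N = P' - N') : Fv hd f P - Fv hd f N = Fv hd f P' - Fv hd f N' := by
  have hadd : P + N' = P' + N := by
    rw [sub_eq_sub_iff_add_eq_add] at h
    exact h
  have h1 : Fv hd f (P + N') = Fv hd f P + Fv hd f N' := Fv_add hd f hf hP hN'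
  have h2 : Fv hd f (P' + N) = Fv hd f P' + Fv hd f N := Fv_add hd f hf hP' hN
  rw [hadd, h2] at h1
  linarith

lemma Lam_spec (hf : Cvx f) {A P N : Matrix (Fin d) (Fin d) ℂ}
    (hP : P.PosSemidef) (hN : N.PosSemidef) (h : hermPart A = P - N) :
    Lam hd f A = Fv hd f P - Fv hd f N := by
  unfold Lam
  exact Fv_sub_indep hd f hf (posPart_psd A) (negPart_psd A) hP hN
    (by rw [← hermPart_eq_parts, h])

lemma Lam_hermPart_congr (hf : Cvx f) {A B : Matrix (Fin d) (Fin d) ℂ}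
    (h : hermPart A = hermPart B) : Lam hd f A = Lam hd f B :=
  Lam_spec hd f hf (posPart_psd B) (negPart_psd B) (h.trans (hermPart_eq_parts B))

lemma Lam_add (hf : Cvx f) (A B : Matrix (Fin d) (Fin d) ℂ) :
    Lam hd f (A + B) = Lam hd f A + Lam hd f B := by
  have hdec : hermPart (A + B) = (posPart A + posPart B) - (negPart A + negPart B) := by
    rw [hermPart_add, hermPart_eq_parts A, hermPart_eq_parts B]
    abel
  rw [Lam_spec hd f hf ((posPart_psd A).add (posPart_psd B))
    ((negPart_psd A).add (negPart_psd B)) hdec,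
    Fv_add hd f hf (posPart_psd A) (posPart_psd B),
    Fv_add hd f hf (negPart_psd A) (negPart_psd B)]
  unfold Lam
  ring

lemma Lam_smul (hf : Cvx f) (r : ℝ) (A : Matrix (Fin d) (Fin d) ℂ) :
    Lam hd f (r • A) = r * Lam hd f A := by
  rcases le_or_gt 0 r with hr | hr
  · have hdec : hermPart (r • A) = (r • posPart A) - (r • negPart A) := by
      rw [hermPart_smul, hermPart_eq_parts A, smul_sub]
    rw [Lam_spec hd f hf (psd_smul (posPart_psd A) hr) (psd_smul (negPart_psd A) hr) hdec,
      Fv_smul_nonneg hd f hf hr (posPart_psd A), Fv_smul_nonneg hd f hf hr (negPart_psd A)]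
    unfold Lam
    ring
  · have hr' : 0 ≤ -r := by linarith
    have hdec : hermPart (r • A) = ((-r) • negPart A) - ((-r) • posPart A) := by
      rw [hermPart_smul, hermPart_eq_parts A, smul_sub, neg_smul, neg_smul]
      abel
    rw [Lam_spec hd f hf (psd_smul (negPart_psd A) hr') (psd_smul (posPart_psd A) hr') hdec,
      Fv_smul_nonneg hd f hf hr' (negPart_psd A), Fv_smul_nonneg hd f hf hr' (posPart_psd A)]
    unfold Lam
    ring

/-- bundled -/
noncomputable def LamL (hf : Cvx f) : Matrix (Fin d) (Fin d) ℂ →ₗ[ℝ] ℝ where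
  toFun := Lam hd f
  map_add' := Lam_add hd f hf
  map_smul' := Lam_smul hd f hf

lemma Lam_of_psd (hf : Cvx f) {A : Matrix (Fin d) (Fin d) ℂ} (hA : A.PosSemidef) :
    Lam hd f A = Fv hd f A := by
  rw [Lam_spec hd f hf hA Matrix.PosSemidef.zero
    (by rw [hermPart_of_isHermitian hA.1, sub_zero]), Fv_zero]
  ring

lemma trace_mul_std (L : Matrix (Fin d) (Fin d) ℂ) (a b : Fin d) :
    (L * single a b 1).trace = L b a := by
  simp [trace, diag, mul_apply, single, ite_and, Finset.sum_ite_eq, eq_comm]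

lemma std_conjTranspose (a b : Fin d) :
    (single a b (1:ℂ))ᴴ = single b a 1 := by
  ext i j
  simp [conjTranspose_apply, single, and_comm]

/-- the reconstructed matrix -/
noncomputable def Lmat : Matrix (Fin d) (Fin d) ℂ :=
  Matrix.of fun a b =>
    (Lam hd f (single b a 1) : ℂ)
      - Complex.I * (Lam hd f (Complex.I • single b a 1) : ℂ)

lemma Lmat_apply (a b : Fin d) :
    Lmat hd f a b = (Lam hd f (single b a 1) : ℂ)
      - Complex.I * (Lam hd f (Complex.I • single b a 1) : ℂ) := rfl

/-- the Born functional of a matrix, as a real linear map -/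
noncomputable def PhiL (L : Matrix (Fin d) (Fin d) ℂ) :
    Matrix (Fin d) (Fin d) ℂ →ₗ[ℝ] ℝ where
  toFun A := ((L * A).trace).re
  map_add' A B := by
    rw [mul_add, trace_add, Complex.add_re]
  map_smul' r A := by
    rw [mul_smul_comm, trace_smul, RingHom.id_apply, Complex.real_smul, Complex.mul_re]
    simp

lemma coe_smul_matrix (r : ℝ) (A : Matrix (Fin d) (Fin d) ℂ) :
    (r : ℂ) • A = r • A := by
  ext i j
  simp [Complex.real_smul]

lemma Lam_conj_pair (hf : Cvx f) (a b : Fin d) :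
    Lam hd f (Complex.I • single a b 1)
      = - Lam hd f (Complex.I • single b a 1) := by
  have h : hermPart (Complex.I • single a b 1)
      = hermPart ((-1 : ℝ) • (Complex.I • single b a (1:ℂ))) := by
    unfold hermPart
    congr 1
    ext i j
    simp only [Matrix.add_apply, Matrix.smul_apply, conjTranspose_apply, single, of_apply,
      smul_eq_mul, mul_ite, mul_one, mul_zero, star_mul', Complex.star_def,
      Complex.conj_I, star_one, neg_smul, one_smul, Matrix.neg_apply, map_zero]
    split_ifs <;> simp [Complex.conj_I] <;> omega
  rw [Lam_hermPart_congr hd f hf h, Lam_smul hd f hf]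
  ring

lemma Lam_symm_pair (hf : Cvx f) (a b : Fin d) :
    Lam hd f (single a b 1) = Lam hd f (single b a 1) := by
  apply Lam_hermPart_congr hd f hf
  unfold hermPart
  rw [std_conjTranspose, std_conjTranspose, add_comm]

lemma Lmat_isHermitian (hf : Cvx f) : (Lmat hd f).IsHermitian := by
  ext a b
  rw [conjTranspose_apply, Lmat_apply, Lmat_apply]
  rw [Lam_symm_pair hd f hf b a, Lam_conj_pair hd f hf b a]
  push_cast
  simp [Complex.ext_iff]

lemma Phi_std (L : Matrix (Fin d) (Fin d) ℂ) (a b : Fin d) :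
    PhiL L (single a b 1) = (L b a).re := by
  show ((L * single a b 1).trace).re = _
  rw [trace_mul_std]

lemma Phi_std_I (L : Matrix (Fin d) (Fin d) ℂ) (a b : Fin d) :
    PhiL L (Complex.I • single a b 1) = - (L b a).im := by
  show ((L * (Complex.I • single a b 1)).trace).re = _
  rw [mul_smul_comm, trace_smul, smul_eq_mul, trace_mul_std, Complex.mul_re]
  simp

lemma Lam_std_eq (a b : Fin d) :
    Lam hd f (single a b 1) = ((Lmat hd f) b a).re := by
  rw [Lmat_apply]
  push_cast
  simp

lemma Lam_std_I_eq (a b : Fin d) :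
    Lam hd f (Complex.I • single a b 1) = - ((Lmat hd f) b a).im := by
  rw [Lmat_apply]
  push_cast
  simp

/-- main identity -/
lemma Lam_eq_Phi (hf : Cvx f) (A : Matrix (Fin d) (Fin d) ℂ) :
    Lam hd f A = ((Lmat hd f * A).trace).re := by
  have key : LamL hd f hf = PhiL (Lmat hd f) := by
    apply LinearMap.ext
    intro A
    have hA : A = ∑ a : Fin d, ∑ b : Fin d,
        ((A a b).re • single a b 1 + (A a b).im • (Complex.I • single a b 1)) := by
      conv_lhs => rw [matrix_eq_sum_single A]
      apply Finset.sum_congr rfl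
      intro a _
      apply Finset.sum_congr rfl
      intro b _
      rw [← coe_smul_matrix, ← coe_smul_matrix, smul_smul, ← add_smul]
      rw [smul_single, smul_eq_mul, mul_one]
      exact congrArg _ (Complex.re_add_im (A a b)).symm
    conv_lhs => rw [hA]
    conv_rhs => rw [hA]
    rw [map_sum, map_sum]
    apply Finset.sum_congr rfl
    intro a _
    rw [map_sum, map_sum]
    apply Finset.sum_congr rfl
    intro b _
    rw [map_add, map_add, LinearMap.map_smul, LinearMap.map_smul, LinearMap.map_smul,
      LinearMap.map_smul]
    have e1 : LamL hd f hf (single a b 1) = PhiL (Lmat hd f) (single a b 1) := by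
      show Lam hd f _ = _
      rw [Phi_std, Lam_std_eq]
    have e2 : LamL hd f hf (Complex.I • single a b 1)
        = PhiL (Lmat hd f) (Complex.I • single a b 1) := by
      show Lam hd f _ = _
      rw [Phi_std_I, Lam_std_I_eq]
    rw [e1, e2]
  have := congrFun (congrArg (fun g => g.toFun) key) A
  exact this

lemma trace_herm_mul_real {L M : Matrix (Fin d) (Fin d) ℂ}
    (hL : L.IsHermitian) (hM : M.IsHermitian) :
    ((L * M).trace) = (((L * M).trace).re : ℂ) := by
  have h : star ((L * M).trace) = (L * M).trace := by
    rw [← trace_conjTranspose, conjTranspose_mul, hL.eq, hM.eq, trace_mul_comm]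
  exact (Complex.conj_eq_iff_re.mp h).symm

lemma Lmat_effect (hf01 : ∀ ρ : DOp d, 0 ≤ f ρ ∧ f ρ ≤ 1) (hf : Cvx f) :
    IsEffect (Lmat hd f) := by
  have hherm := Lmat_isHermitian hd f hf
  constructor
  · refine PosSemidef.of_dotProduct_mulVec_nonneg hherm fun x => ?_
    set X := replicateCol (Fin 1) x * (replicateCol (Fin 1) x)ᴴ with hX
    have hXpsd : X.PosSemidef := posSemidef_self_mul_conjTranspose _
    have h1 : star x ⬝ᵥ Lmat hd f *ᵥ x = (Lmat hd f * X).trace := (trace_mul_col_row _ x).symm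
    rw [h1, trace_herm_mul_real hherm hXpsd.1, Complex.zero_le_real,
      ← Lam_eq_Phi hd f hf, Lam_of_psd hd f hf hXpsd]
    exact Fv_nonneg hd f (fun ρ => (hf01 ρ).1) hXpsd
  · have hherm1 : (1 - Lmat hd f).IsHermitian := Matrix.isHermitian_one.sub hherm
    refine PosSemidef.of_dotProduct_mulVec_nonneg hherm1 fun x => ?_
    set X := replicateCol (Fin 1) x * (replicateCol (Fin 1) x)ᴴ with hX
    have hXpsd : X.PosSemidef := posSemidef_self_mul_conjTranspose _
    have h1 : star x ⬝ᵥ (1 - Lmat hd f) *ᵥ x = ((1 - Lmat hd f) * X).trace :=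
      (trace_mul_col_row _ x).symm
    rw [h1, trace_herm_mul_real hherm1 hXpsd.1, Complex.zero_le_real, sub_mul, one_mul,
      trace_sub, Complex.sub_re, ← Lam_eq_Phi hd f hf, Lam_of_psd hd f hf hXpsd, sub_nonneg]
    exact Fv_le_trace hd f (fun ρ => (hf01 ρ).2) hXpsd

lemma born_nonneg {L ρ : Matrix (Fin d) (Fin d) ℂ} (hL : L.PosSemidef) (hρ : ρ.PosSemidef) :
    0 ≤ ((L * ρ).trace).re := by
  obtain ⟨B, rfl⟩ : ∃ B : Matrix (Fin d) (Fin d) ℂ, ρ = Bᴴ * B := by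
    open scoped MatrixOrder in exact CStarAlgebra.nonneg_iff_eq_star_mul_self.mp hρ.nonneg
  have h : (L * (Bᴴ * B)).trace = (B * L * Bᴴ).trace := by
    rw [← mul_assoc, trace_mul_comm, ← mul_assoc]
  rw [h]
  exact psd_trace_re_nonneg (hL.mul_mul_conjTranspose_same B)

lemma herm_eq_zero_of_re_quad {D : Matrix (Fin d) (Fin d) ℂ} (hD : D.IsHermitian)
    (h : ∀ x, ((star x ⬝ᵥ D *ᵥ x)).re = 0) : D = 0 := by
  classical
  have he : ∀ i, hD.eigenvalues i = 0 := by
    intro i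
    rw [hD.eigenvalues_eq]
    exact h _
  have hsp := hD.spectral_theorem
  have hz : (RCLike.ofReal ∘ hD.eigenvalues : Fin d → ℂ) = fun _ => 0 :=
    funext fun i => by simp [he i]
  rw [hsp, hz]
  simp

end BornAux

open BornAux in
/-- The Born-rule map `L ↦ (ρ ↦ Re (tr (L * ρ)))` is a bijection from the set of
effects onto the set of `[0,1]`-valued convex functions on density operators. -/
theorem stmt2 (d : ℕ) (hd : 1 ≤ d) :
    Set.BijOn (fun L : Matrix (Fin d) (Fin d) ℂ => fun ρ : DOp d => ((L * ρ.1).trace).re)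
      {L | IsEffect L}
      {f : DOp d → ℝ |
        (∀ ρ : DOp d, 0 ≤ f ρ ∧ f ρ ≤ 1) ∧
        (∀ (ρ σ : DOp d) (p : ℝ), 0 ≤ p → p ≤ 1 →
          ∀ h : IsDensity (p • ρ.1 + (1 - p) • σ.1),
            f ⟨p • ρ.1 + (1 - p) • σ.1, h⟩ = p * f ρ + (1 - p) * f σ)} := by
  refine ⟨?_, ?_, ?_⟩
  · -- MapsTo
    rintro L ⟨hL1, hL2⟩
    constructor
    · intro ρ
      refine ⟨born_nonneg hL1 ρ.2.1, ?_⟩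
      have h2 := born_nonneg hL2 ρ.2.1
      have hsplit : ((1 - L) * ρ.1).trace = ρ.1.trace - (L * ρ.1).trace := by
        rw [sub_mul, one_mul, trace_sub]
      rw [hsplit, ρ.2.2, Complex.sub_re] at h2
      simp only [Complex.one_re] at h2
      linarith
    · intro ρ σ p hp0 hp1 h
      show ((L * (p • ρ.1 + (1 - p) • σ.1)).trace).re = _
      rw [mul_add, trace_add, mul_smul_comm, mul_smul_comm, trace_smul, trace_smul]
      simp [Complex.add_re, Complex.real_smul, Complex.mul_re]
  · -- InjOn
    rintro L ⟨hL1, hL2⟩ M ⟨hM1, hM2⟩ heq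
    have hD : (L - M).IsHermitian := hL1.1.sub hM1.1
    have hquad : ∀ x : Fin d → ℂ, ((star x ⬝ᵥ (L - M) *ᵥ x)).re = 0 := by
      intro x
      set X := replicateCol (Fin 1) x * (replicateCol (Fin 1) x)ᴴ with hX
      have hXpsd : X.PosSemidef := posSemidef_self_mul_conjTranspose _
      rw [← trace_mul_col_row, sub_mul, trace_sub, Complex.sub_re, sub_eq_zero, ← hX]
      by_cases ht : X.trace.re = 0
      · rw [psd_eq_zero_of_trace hXpsd ht]
        simp
      · have hden := isDensity_inv_smul hXpsd ht
        have happ := congrFun heq (⟨_, hden⟩ : DOp d)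
        dsimp only at happ
        have key : ∀ K : Matrix (Fin d) (Fin d) ℂ,
            ((K * ((X.trace.re)⁻¹ • X)).trace).re = (X.trace.re)⁻¹ * ((K * X).trace).re := by
          intro K
          rw [mul_smul_comm, trace_smul, Complex.real_smul, Complex.mul_re]
          simp
        rw [key, key] at happ
        exact mul_left_cancel₀ (inv_ne_zero ht) happ
    have h0 : L - M = 0 := herm_eq_zero_of_re_quad hD hquad
    exact sub_eq_zero.mp h0
  · -- SurjOn
    rintro g ⟨hg01, hgc⟩
    have hgc' : Cvx g := hgc
    refine ⟨Lmat hd g, Lmat_effect hd g hg01 hgc', ?_⟩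
    funext ρ
    show ((Lmat hd g * ρ.1).trace).re = g ρ
    rw [← Lam_eq_Phi hd g hgc', Lam_of_psd hd g hgc' ρ.2.1, Fv_of_density]
end

section
/- Let 𝕃 be a finite set of effects on ℂ^d containing the zero matrix and closed under defined sums (if L, L' ∈ 𝕃 and L + L' is an effect, then L + L' ∈ 𝕃). Let (X, c) and (Y, d) be quantum Markov chains on ℂ^d all of whose weights lie in 𝕃 (c x x' ∈ 𝕃 for all x, x' and d y y' ∈ 𝕃 for all y, y'). If x : X and y : Y are kernel bisimilar in the instantiated probabilistic Markov chains (X, c_ρ) and (Y, d_ρ) for every density operator ρ on ℂ^d, then x and y are kernel bisimilar in (X, c) and (Y, d). -/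
open Matrix ComplexOrder

/-- Pushforward of a (finitely supported) weight function along `f`. -/
noncomputable def push {M : Type*} [AddCommMonoid M] {X Z : Type} (f : X → Z)
    (Δ : X → M) : Z → M :=
  fun z => ∑ᶠ (x : X) (_ : f x = z), Δ x

/-- A quantum (sub)distribution on `X` with weights on ℂ^d. -/
def IsQDist {d : ℕ} {X : Type} (Δ : X → Matrix (Fin d) (Fin d) ℂ) : Prop :=
  (Function.support Δ).Finite ∧ (∀ x, (Δ x).PosSemidef) ∧ (1 - ∑ᶠ x, Δ x).PosSemidef

/-- A quantum Markov chain on ℂ^d. -/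
def IsQMC {d : ℕ} {X : Type} (c : X → X → Matrix (Fin d) (Fin d) ℂ) : Prop :=
  ∀ x, IsQDist (c x)

/-- A homomorphism of quantum Markov chains. -/
def IsQHom {d : ℕ} {X Z : Type} (c : X → X → Matrix (Fin d) (Fin d) ℂ)
    (e : Z → Z → Matrix (Fin d) (Fin d) ℂ) (f : X → Z) : Prop :=
  ∀ x, e (f x) = push f (c x)

/-- Kernel bisimilarity of states of two quantum Markov chains. -/
def QKernelBisim {d : ℕ} {X Y : Type} (c : X → X → Matrix (Fin d) (Fin d) ℂ)
    (dY : Y → Y → Matrix (Fin d) (Fin d) ℂ) (x : X) (y : Y) : Prop :=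
  ∃ (Z : Type) (e : Z → Z → Matrix (Fin d) (Fin d) ℂ) (m₁ : X → Z) (m₂ : Y → Z),
    IsQMC e ∧ IsQHom c e m₁ ∧ IsQHom dY e m₂ ∧ m₁ x = m₂ y

/-- A probability (sub)distribution on `X`. -/
def IsPDist {X : Type} (Δ : X → ℝ) : Prop :=
  (Function.support Δ).Finite ∧ (∀ x, 0 ≤ Δ x) ∧ ∑ᶠ x, Δ x ≤ 1

/-- A probabilistic Markov chain. -/
def IsPMC {X : Type} (c : X → X → ℝ) : Prop :=
  ∀ x, IsPDist (c x)

/-- A homomorphism of probabilistic Markov chains. -/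
def IsPHom {X Z : Type} (c : X → X → ℝ) (e : Z → Z → ℝ) (f : X → Z) : Prop :=
  ∀ x, e (f x) = push f (c x)

/-- Kernel bisimilarity of states of two probabilistic Markov chains. -/
def PKernelBisim {X Y : Type} (c : X → X → ℝ) (dY : Y → Y → ℝ) (x : X) (y : Y) : Prop :=
  ∃ (Z : Type) (e : Z → Z → ℝ) (m₁ : X → Z) (m₂ : Y → Z),
    IsPMC e ∧ IsPHom c e m₁ ∧ IsPHom dY e m₂ ∧ m₁ x = m₂ y

/-- Instantiation of a quantum Markov chain at a density operator `ρ`: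
the probabilistic Markov chain with weights `Re (tr (c x x' * ρ))`. -/
noncomputable def instMC {d : ℕ} {X : Type} (ρ : Matrix (Fin d) (Fin d) ℂ)
    (c : X → X → Matrix (Fin d) (Fin d) ℂ) : X → X → ℝ :=
  fun x x' => ((c x x' * ρ).trace).re


lemma push_eq_sum {M : Type*} [AddCommMonoid M] {X Z : Type} [DecidableEq Z] (f : X → Z)
    (Δ : X → M) {S : Finset X} (hS : Function.support Δ ⊆ ↑S) (z : Z) :
    push f Δ z = ∑ x ∈ S, if f x = z then Δ x else 0 := by
  classical
  show (∑ᶠ (x : X) (_ : f x = z), Δ x) = _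
  rw [show (fun x => ∑ᶠ (_ : f x = z), Δ x) = fun x => if f x = z then Δ x else 0 from
    funext fun x => finsum_eq_if]
  apply finsum_eq_sum_of_support_subset
  intro x hx
  apply hS
  intro hΔ
  simp [Function.mem_support, hΔ] at hx

lemma push_eq_filter_sum {M : Type*} [AddCommMonoid M] {X Z : Type} [DecidableEq Z] (f : X → Z)
    (Δ : X → M) {S : Finset X} (hS : Function.support Δ ⊆ ↑S) (z : Z) :
    push f Δ z = ∑ x ∈ S.filter (fun x => f x = z), Δ x := by
  rw [push_eq_sum f Δ hS z, Finset.sum_filter]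

lemma finsum_push {M : Type*} [AddCommMonoid M] {X Z : Type} (f : X → Z)
    (Δ : X → M) {S : Finset X} (hS : Function.support Δ ⊆ ↑S) :
    ∑ᶠ z, push f Δ z = ∑ᶠ x, Δ x := by
  classical
  have hsupp : Function.support (push f Δ) ⊆ ↑(S.image f) := by
    intro z hz
    rw [Function.mem_support, push_eq_filter_sum f Δ hS z] at hz
    obtain ⟨x, hx⟩ := Finset.exists_ne_zero_of_sum_ne_zero hz
    simp only [Finset.mem_filter] at hx
    simp only [Finset.coe_image, Set.mem_image]
    exact ⟨x, Finset.mem_coe.2 hx.1.1, hx.1.2⟩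
  rw [finsum_eq_sum_of_support_subset _ hsupp, finsum_eq_sum_of_support_subset _ hS]
  have : ∀ z ∈ S.image f, push f Δ z = ∑ x ∈ S.filter (fun x => f x = z), Δ x :=
    fun z _ => push_eq_filter_sum f Δ hS z
  rw [Finset.sum_congr rfl this]
  exact Finset.sum_fiberwise_of_maps_to (fun x hx => Finset.mem_image_of_mem f hx) Δ

lemma push_map {M N : Type*} [AddCommMonoid M] [AddCommMonoid N] {X Z : Type} (f : X → Z)
    (Δ : X → M) (φ : M →+ N) (hfin : (Function.support Δ).Finite) :
    push f (fun x => φ (Δ x)) = fun z => φ (push f Δ z) := by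
  classical
  funext z
  have hS : Function.support Δ ⊆ ↑hfin.toFinset := by simp
  have hS' : Function.support (fun x => φ (Δ x)) ⊆ ↑hfin.toFinset := by
    intro x hx
    apply hS
    intro h0
    simp [Function.mem_support, h0] at hx
  rw [push_eq_sum f _ hS' z, push_eq_sum f Δ hS z, map_sum]
  refine Finset.sum_congr rfl fun x _ => ?_
  split <;> simp

lemma posSemidef_finset_sum {d : ℕ} {ι : Type*} (s : Finset ι)
    (g : ι → Matrix (Fin d) (Fin d) ℂ) (hg : ∀ i ∈ s, (g i).PosSemidef) :
    (∑ i ∈ s, g i).PosSemidef :=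
  Finset.sum_induction g _ (fun _ _ ha hb => ha.add hb) Matrix.PosSemidef.zero hg

lemma posSemidef_real_smul {d : ℕ} {M : Matrix (Fin d) (Fin d) ℂ} (hM : M.PosSemidef)
    {c : ℝ} (hc : 0 ≤ c) : ((c : ℂ) • M).PosSemidef := by
  refine posSemidef_iff_dotProduct_mulVec.mpr ⟨?_, ?_⟩
  · show ((c : ℂ) • M)ᴴ = _
    rw [conjTranspose_smul, hM.1.eq]
    congr 1
    simp
  · intro x
    rw [smul_mulVec, dotProduct_smul, smul_eq_mul]
    exact mul_nonneg (by exact_mod_cast Complex.zero_le_real.2 hc) (hM.dotProduct_mulVec_nonneg x)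

lemma exists_density_re_trace_ne {d : ℕ} {H : Matrix (Fin d) (Fin d) ℂ}
    (hH : H.IsHermitian) (h0 : H ≠ 0) :
    ∃ ρ, IsDensity ρ ∧ ((H * ρ).trace).re ≠ 0 := by
  classical
  have hev : ∃ i, hH.eigenvalues i ≠ 0 := by
    by_contra hall
    push_neg at hall
    apply h0
    have hst := hH.spectral_theorem
    have hzero : (RCLike.ofReal ∘ hH.eigenvalues : Fin d → ℂ) = 0 := by
      funext i; simp [hall i]
    rw [hst, hzero]
    rw [show (0 : Fin d → ℂ) = fun _ => (0:ℂ) from rfl, diagonal_zero, map_zero]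
  obtain ⟨i, hi⟩ := hev
  set v : Fin d → ℂ := ⇑(hH.eigenvectorBasis i) with hv
  have hnorm : star v ⬝ᵥ v = 1 := by
    have h1 : ‖hH.eigenvectorBasis i‖ = 1 := hH.eigenvectorBasis.orthonormal.1 i
    have h2 := inner_self_eq_norm_sq_to_K (𝕜 := ℂ) (hH.eigenvectorBasis i)
    rw [EuclideanSpace.inner_eq_star_dotProduct] at h2
    rw [h1] at h2
    rw [hv, dotProduct_comm]
    simpa using h2
  have hmul : H *ᵥ v = (hH.eigenvalues i : ℂ) • v := by
    have h := hH.mulVec_eigenvectorBasis i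
    rw [RCLike.real_smul_eq_coe_smul (K := ℂ)] at h
    exact h
  have htr : ∀ A : Matrix (Fin d) (Fin d) ℂ, (A * vecMulVec v (star v)).trace
      = star v ⬝ᵥ (A *ᵥ v) := by
    intro A
    simp only [trace, diag, mul_apply, vecMulVec_apply, dotProduct, mulVec, Pi.star_apply,
      Finset.mul_sum]
    refine Finset.sum_congr rfl fun j _ => Finset.sum_congr rfl fun k _ => by ring
  refine ⟨vecMulVec v (star v), ⟨posSemidef_iff_dotProduct_mulVec.mpr ⟨?_, ?_⟩, ?_⟩, ?_⟩
  · show (vecMulVec v (star v))ᴴ = _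
    ext j k
    simp [vecMulVec_apply, conjTranspose_apply, mul_comm]
  · intro x
    have hmv : vecMulVec v (star v) *ᵥ x = (star v ⬝ᵥ x) • v := by
      ext j
      simp only [mulVec, vecMulVec_apply, dotProduct, Pi.smul_apply, smul_eq_mul,
        Pi.star_apply, Finset.sum_mul, Finset.mul_sum]
      refine Finset.sum_congr rfl fun k _ => by ring
    rw [hmv, dotProduct_smul, smul_eq_mul]
    have hs : star x ⬝ᵥ v = star (star v ⬝ᵥ x) := by
      rw [star_dotProduct]
    rw [hs, mul_comm]
    exact star_mul_self_nonneg _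
  · show (vecMulVec v (star v)).trace = 1
    have : (vecMulVec v (star v)).trace = star v ⬝ᵥ v := by
      simp only [trace, diag, vecMulVec_apply, dotProduct, Pi.star_apply]
      exact Finset.sum_congr rfl fun j _ => mul_comm _ _
    rw [this, hnorm]
  · rw [htr H, hmul, dotProduct_smul, hnorm, smul_eq_mul, mul_one]
    simpa using hi

lemma trace_smul_add_re {d : ℕ} (H ρ ρ' : Matrix (Fin d) (Fin d) ℂ) (s t : ℝ) :
    ((H * ((s:ℂ) • ρ + (t:ℂ) • ρ')).trace).re
      = s * ((H * ρ).trace).re + t * ((H * ρ').trace).re := by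
  rw [mul_add, trace_add, mul_smul_comm, mul_smul_comm, trace_smul, trace_smul]
  simp [Complex.add_re, Complex.smul_re]

lemma exists_density_forall_ne {d : ℕ} (hd : 0 < d) :
    ∀ (D : Finset (Matrix (Fin d) (Fin d) ℂ)),
      (∀ H ∈ D, H.IsHermitian ∧ H ≠ 0) →
      ∃ ρ, IsDensity ρ ∧ ∀ H ∈ D, ((H * ρ).trace).re ≠ 0 := by
  classical
  intro D
  induction D using Finset.induction_on with
  | empty =>
    intro _
    refine ⟨(((d:ℝ)⁻¹ : ℝ) : ℂ) • 1, ⟨posSemidef_real_smul Matrix.PosSemidef.one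
      (by positivity), ?_⟩, by simp⟩
    rw [trace_smul, trace_one]
    simp only [smul_eq_mul]
    rw [← Complex.ofReal_natCast, ← Complex.ofReal_mul]
    rw [Fintype.card_fin, inv_mul_cancel₀ (by exact_mod_cast hd.ne' : (d:ℝ) ≠ 0)]
    simp
  | @insert H₀ D hnot ih =>
    intro hD
    obtain ⟨ρ, hρ, hsep⟩ := ih fun H hH => hD H (Finset.mem_insert_of_mem hH)
    by_cases ha0 : ((H₀ * ρ).trace).re ≠ 0
    · exact ⟨ρ, hρ, fun H hH => by
        rcases Finset.mem_insert.1 hH with rfl | hH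
        · exact ha0
        · exact hsep H hH⟩
    push_neg at ha0
    obtain ⟨ρ', hρ', hb0⟩ := exists_density_re_trace_ne (hD H₀ (Finset.mem_insert_self _ _)).1
      (hD H₀ (Finset.mem_insert_self _ _)).2
    -- zero sets of affine functions
    set a : Matrix (Fin d) (Fin d) ℂ → ℝ := fun H => ((H * ρ).trace).re with ha
    set b : Matrix (Fin d) (Fin d) ℂ → ℝ := fun H => ((H * ρ').trace).re with hb
    have hfin : ∀ H ∈ D, ({t : ℝ | (1 - t) * a H + t * b H = 0}).Finite := by
      intro H hH
      have haH : a H ≠ 0 := hsep H hH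
      apply Set.Finite.subset (Set.finite_singleton (a H / (a H - b H)))
      intro t ht
      simp only [Set.mem_setOf_eq] at ht
      have h1 : a H + t * (b H - a H) = 0 := by linarith [ht]
      have h2 : a H - b H ≠ 0 := by
        intro h
        apply haH
        have : b H = a H := by linarith
        rw [this] at h1
        simpa using h1
      simp only [Set.mem_singleton_iff]
      field_simp
      linarith
    have hbig : (Set.Ioo (0:ℝ) 1 \ ⋃ H ∈ D, {t : ℝ | (1 - t) * a H + t * b H = 0}).Nonempty := by
      apply Set.Infinite.nonempty
      apply Set.Infinite.diff
      · exact Set.Ioo_infinite (by norm_num)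
      · exact Set.Finite.biUnion D.finite_toSet hfin
    obtain ⟨t, ht⟩ := hbig
    obtain ⟨⟨ht0, ht1⟩, htz⟩ := ht
    refine ⟨((1 - t : ℝ) : ℂ) • ρ + ((t : ℝ) : ℂ) • ρ', ⟨?_, ?_⟩, ?_⟩
    · exact (posSemidef_real_smul hρ.1 (by linarith)).add (posSemidef_real_smul hρ'.1 ht0.le)
    · rw [trace_add, trace_smul, trace_smul, hρ.2, hρ'.2]
      simp only [smul_eq_mul, mul_one]
      rw [← Complex.ofReal_add]
      norm_num
    · intro H hH
      rw [trace_smul_add_re]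
      rcases Finset.mem_insert.1 hH with rfl | hH
      · rw [ha0, mul_zero, zero_add]
        exact mul_ne_zero ht0.ne' hb0
      · intro hzero
        apply htz
        simp only [Set.mem_iUnion, Set.mem_setOf_eq]
        exact ⟨H, hH, hzero⟩

lemma support_push_subset {M : Type*} [AddCommMonoid M] {X Z : Type} [DecidableEq Z] (f : X → Z)
    (Δ : X → M) {S : Finset X} (hS : Function.support Δ ⊆ ↑S) :
    Function.support (push f Δ) ⊆ ↑(S.image f) := by
  intro z hz
  rw [Function.mem_support, push_eq_filter_sum f Δ hS z] at hz
  obtain ⟨x, hx⟩ := Finset.exists_ne_zero_of_sum_ne_zero hz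
  simp only [Finset.mem_filter] at hx
  simp only [Finset.coe_image, Set.mem_image]
  exact ⟨x, Finset.mem_coe.2 hx.1.1, hx.1.2⟩

lemma isQDist_zero {d : ℕ} {X : Type} :
    IsQDist (fun _ : X => (0 : Matrix (Fin d) (Fin d) ℂ)) := by
  refine ⟨?_, fun _ => Matrix.PosSemidef.zero, ?_⟩
  · convert Set.finite_empty
    simp [Function.support]
  · have : ∑ᶠ _ : X, (0 : Matrix (Fin d) (Fin d) ℂ) = 0 := finsum_zero
    rw [this, sub_zero]
    exact Matrix.PosSemidef.one

lemma isQDist_push {d : ℕ} {X Z : Type} {Δ : X → Matrix (Fin d) (Fin d) ℂ}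
    (hΔ : IsQDist Δ) (f : X → Z) : IsQDist (push f Δ) := by
  classical
  obtain ⟨hfin, hpsd, hone⟩ := hΔ
  have hS : Function.support Δ ⊆ ↑hfin.toFinset := by simp
  refine ⟨?_, ?_, ?_⟩
  · exact Set.Finite.subset (hfin.toFinset.image f).finite_toSet (support_push_subset f Δ hS)
  · intro z
    rw [push_eq_filter_sum f Δ hS z]
    exact posSemidef_finset_sum _ _ fun i _ => hpsd i
  · rw [finsum_push f Δ hS]
    exact hone

lemma sum_isEffect {d : ℕ} {X : Type} {Δ : X → Matrix (Fin d) (Fin d) ℂ} (hΔ : IsQDist Δ)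
    {S T : Finset X} (hS : Function.support Δ ⊆ ↑S) (hT : T ⊆ S) :
    IsEffect (∑ x ∈ T, Δ x) := by
  classical
  obtain ⟨hfin, hpsd, hone⟩ := hΔ
  constructor
  · exact posSemidef_finset_sum _ _ fun i _ => hpsd i
  · have htot : ∑ᶠ x, Δ x = ∑ x ∈ S, Δ x := finsum_eq_sum_of_support_subset _ hS
    have hsplit : ∑ x ∈ S, Δ x = ∑ x ∈ S \ T, Δ x + ∑ x ∈ T, Δ x := (Finset.sum_sdiff hT).symm
    have hrw : (1 : Matrix (Fin d) (Fin d) ℂ) - ∑ x ∈ T, Δ x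
        = (1 - ∑ᶠ x, Δ x) + ∑ x ∈ S \ T, Δ x := by
      rw [htot, hsplit]; abel
    rw [hrw]
    exact hone.add (posSemidef_finset_sum _ _ fun i _ => hpsd i)

lemma sum_mem_effectAlg {d : ℕ} (𝕃 : Finset (Matrix (Fin d) (Fin d) ℂ))
    (h0 : (0 : Matrix (Fin d) (Fin d) ℂ) ∈ 𝕃)
    (hclosed : ∀ L ∈ 𝕃, ∀ L' ∈ 𝕃, IsEffect (L + L') → L + L' ∈ 𝕃)
    {X : Type} {Δ : X → Matrix (Fin d) (Fin d) ℂ} (hΔ : IsQDist Δ) (hmem : ∀ x, Δ x ∈ 𝕃)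
    {S : Finset X} (hS : Function.support Δ ⊆ ↑S) :
    ∀ T, T ⊆ S → (∑ x ∈ T, Δ x) ∈ 𝕃 := by
  classical
  intro T
  induction T using Finset.induction_on with
  | empty => intro _; simpa using h0
  | @insert a T hnot ih =>
    intro hsub
    rw [Finset.sum_insert hnot]
    refine hclosed _ (hmem a) _ (ih ((Finset.subset_insert a T).trans hsub)) ?_
    rw [← Finset.sum_insert hnot]
    exact sum_isEffect ⟨hΔ.1, hΔ.2.1, hΔ.2.2⟩ hS hsub

lemma push_mem_effectAlg {d : ℕ} (𝕃 : Finset (Matrix (Fin d) (Fin d) ℂ))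
    (h0 : (0 : Matrix (Fin d) (Fin d) ℂ) ∈ 𝕃)
    (hclosed : ∀ L ∈ 𝕃, ∀ L' ∈ 𝕃, IsEffect (L + L') → L + L' ∈ 𝕃)
    {X Z : Type} {Δ : X → Matrix (Fin d) (Fin d) ℂ} (hΔ : IsQDist Δ) (hmem : ∀ x, Δ x ∈ 𝕃)
    (f : X → Z) (z : Z) : push f Δ z ∈ 𝕃 := by
  classical
  have hS : Function.support Δ ⊆ ↑hΔ.1.toFinset := by simp
  rw [push_eq_filter_sum f Δ hS z]
  exact sum_mem_effectAlg 𝕃 h0 hclosed hΔ hmem hS _ (Finset.filter_subset _ _)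

/-- If the weights of two quantum Markov chains lie in a finite effect algebra 𝕃
and two states are kernel bisimilar in every instantiation, then they are kernel
bisimilar in the quantum Markov chains themselves. -/
theorem stmt9 (d : ℕ) (𝕃 : Finset (Matrix (Fin d) (Fin d) ℂ))
    (heff : ∀ L ∈ 𝕃, IsEffect L)
    (h0 : (0 : Matrix (Fin d) (Fin d) ℂ) ∈ 𝕃)
    (hclosed : ∀ L ∈ 𝕃, ∀ L' ∈ 𝕃, IsEffect (L + L') → L + L' ∈ 𝕃)
    {X Y : Type} (c : X → X → Matrix (Fin d) (Fin d) ℂ)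
    (dY : Y → Y → Matrix (Fin d) (Fin d) ℂ)
    (hc : IsQMC c) (hd : IsQMC dY)
    (hcL : ∀ x x', c x x' ∈ 𝕃) (hdL : ∀ y y', dY y y' ∈ 𝕃)
    (x : X) (y : Y)
    (h : ∀ ρ : Matrix (Fin d) (Fin d) ℂ, IsDensity ρ →
      PKernelBisim (instMC ρ c) (instMC ρ dY) x y) :
    QKernelBisim c dY x y := by
  classical
  rcases Nat.eq_zero_or_pos d with hd0 | hdpos
  · subst hd0
    haveI : Subsingleton (Matrix (Fin 0) (Fin 0) ℂ) := ⟨fun A B => by ext i; exact i.elim0⟩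
    exact ⟨Unit, fun _ _ => 0, fun _ => (), fun _ => (),
      fun _ => isQDist_zero,
      fun x₀ => funext fun z => Subsingleton.elim _ _,
      fun y₀ => funext fun z => Subsingleton.elim _ _, rfl⟩
  set D : Finset (Matrix (Fin d) (Fin d) ℂ) :=
    ((𝕃 ×ˢ 𝕃).image fun p => p.1 - p.2).filter (fun H => H ≠ 0) with hDdef
  have hD : ∀ H ∈ D, H.IsHermitian ∧ H ≠ 0 := by
    intro H hH
    rw [hDdef, Finset.mem_filter, Finset.mem_image] at hH
    obtain ⟨⟨p, hp, rfl⟩, hne⟩ := hH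
    rw [Finset.mem_product] at hp
    exact ⟨((heff _ hp.1).1.1).sub ((heff _ hp.2).1.1), hne⟩
  obtain ⟨ρ, hρ, hsep⟩ := exists_density_forall_ne hdpos D hD
  have sep : ∀ A ∈ 𝕃, ∀ B ∈ 𝕃, ((A * ρ).trace).re = ((B * ρ).trace).re → A = B := by
    intro A hA B hB hre
    by_contra hne
    have hmem : A - B ∈ D := by
      rw [hDdef, Finset.mem_filter]
      exact ⟨Finset.mem_image.2 ⟨(A, B), Finset.mem_product.2 ⟨hA, hB⟩, rfl⟩, sub_ne_zero.2 hne⟩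
    apply hsep _ hmem
    rw [sub_mul, trace_sub]
    simp [Complex.sub_re, hre]
  obtain ⟨Z, e, m₁, m₂, heMC, h1, h2, hxy⟩ := h ρ hρ
  set φ : Matrix (Fin d) (Fin d) ℂ →+ ℝ :=
    { toFun := fun M => ((M * ρ).trace).re
      map_zero' := by simp
      map_add' := fun A B => by
        show ((A + B) * ρ).trace.re = (A * ρ).trace.re + (B * ρ).trace.re
        rw [add_mul, trace_add, Complex.add_re] } with hφ
  have keyc : ∀ x₀ z, φ (push m₁ (c x₀) z) = e (m₁ x₀) z := by
    intro x₀ z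
    rw [congrFun (h1 x₀) z]
    have h2' : instMC ρ c x₀ = fun x' => φ (c x₀ x') := rfl
    rw [h2', push_map m₁ (c x₀) φ (hc x₀).1]
  have keyd : ∀ y₀ z, φ (push m₂ (dY y₀) z) = e (m₂ y₀) z := by
    intro y₀ z
    rw [congrFun (h2 y₀) z]
    have h2' : instMC ρ dY y₀ = fun y' => φ (dY y₀ y') := rfl
    rw [h2', push_map m₂ (dY y₀) φ (hd y₀).1]
  have memc : ∀ x₀ z, push m₁ (c x₀) z ∈ 𝕃 :=
    fun x₀ z => push_mem_effectAlg 𝕃 h0 hclosed (hc x₀) (hcL x₀) m₁ z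
  have memd : ∀ y₀ z, push m₂ (dY y₀) z ∈ 𝕃 :=
    fun y₀ z => push_mem_effectAlg 𝕃 h0 hclosed (hd y₀) (hdL y₀) m₂ z
  have wd1 : ∀ x₁ x₂, m₁ x₁ = m₁ x₂ → push m₁ (c x₁) = push m₁ (c x₂) := by
    intro x₁ x₂ hm
    funext z
    refine sep _ (memc x₁ z) _ (memc x₂ z) ?_
    show φ _ = φ _
    rw [keyc, keyc, hm]
  have wd2 : ∀ y₁ y₂, m₂ y₁ = m₂ y₂ → push m₂ (dY y₁) = push m₂ (dY y₂) := by
    intro y₁ y₂ hm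
    funext z
    refine sep _ (memd y₁ z) _ (memd y₂ z) ?_
    show φ _ = φ _
    rw [keyd, keyd, hm]
  have wdm : ∀ x₁ y₁, m₁ x₁ = m₂ y₁ → push m₁ (c x₁) = push m₂ (dY y₁) := by
    intro x₁ y₁ hm
    funext z
    refine sep _ (memc x₁ z) _ (memd y₁ z) ?_
    show φ _ = φ _
    rw [keyc, keyd, hm]
  refine ⟨Z, fun z => if hz : ∃ x₀, m₁ x₀ = z then push m₁ (c hz.choose)
      else if hz' : ∃ y₀, m₂ y₀ = z then push m₂ (dY hz'.choose) else fun _ => 0,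
    m₁, m₂, ?_, ?_, ?_, hxy⟩
  · intro z
    dsimp only
    split
    · exact isQDist_push (hc _) m₁
    split
    · exact isQDist_push (hd _) m₂
    · exact isQDist_zero
  · intro x₀
    dsimp only
    rw [dif_pos ⟨x₀, rfl⟩]
    exact wd1 _ _ (Exists.choose_spec (⟨x₀, rfl⟩ : ∃ x₁, m₁ x₁ = m₁ x₀))
  · intro y₀
    dsimp only
    by_cases hz : ∃ x₁, m₁ x₁ = m₂ y₀
    · rw [dif_pos hz]
      exact wdm _ _ hz.choose_spec
    · rw [dif_neg hz, dif_pos ⟨y₀, rfl⟩]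
      exact wd2 _ _ (Exists.choose_spec (⟨y₀, rfl⟩ : ∃ y₁, m₂ y₁ = m₂ y₀))
end

section
/- Let (X, c) and (Y, d) be quantum Markov chains on ℂ^d. If x : X and y : Y are kernel bisimilar in (X, c) and (Y, d), then for every density operator ρ on ℂ^d, x and y are kernel bisimilar in the instantiated probabilistic Markov chains (X, c_ρ) and (Y, d_ρ). -/
open Matrix ComplexOrder

lemma trace_re_nonneg {d : ℕ} {A : Matrix (Fin d) (Fin d) ℂ} (hA : A.PosSemidef) :
    0 ≤ (A.trace).re := by
  rw [Matrix.trace]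
  simp only [Complex.re_sum]
  apply Finset.sum_nonneg
  intro i _
  have h := hA.dotProduct_mulVec_nonneg (Pi.single i 1)
  rw [Complex.le_def] at h
  have : star (Pi.single i 1 : Fin d → ℂ) ⬝ᵥ A *ᵥ (Pi.single i 1) = A i i := by
    simp [Matrix.mulVec_single, Pi.single_apply, dotProduct]
  rw [this] at h
  exact h.1

lemma trace_mul_re_nonneg {d : ℕ} {A B : Matrix (Fin d) (Fin d) ℂ}
    (hA : A.PosSemidef) (hB : B.PosSemidef) : 0 ≤ ((A * B).trace).re := by
  open scoped MatrixOrder in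
  obtain ⟨S, hs, hS⟩ : ∃ S : Matrix (Fin d) (Fin d) ℂ, S * S = A ∧ S.PosSemidef :=
    ⟨CFC.sqrt A, CFC.sqrt_mul_sqrt_self A (Matrix.nonneg_iff_posSemidef.mpr hA),
      Matrix.nonneg_iff_posSemidef.mp (CFC.sqrt_nonneg A)⟩
  have h1 : (A * B).trace = (S * B * S).trace := by
    conv_lhs => rw [← hs]
    rw [Matrix.mul_assoc, Matrix.trace_mul_comm]
  rw [h1]
  have h2 : (S * B * S).PosSemidef := by
    have := hB.conjTranspose_mul_mul_same S
    rwa [hS.isHermitian.eq] at this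
  exact trace_re_nonneg h2

/-- The instantiation functional as an additive monoid homomorphism. -/
noncomputable def traceRe {d : ℕ} (ρ : Matrix (Fin d) (Fin d) ℂ) :
    Matrix (Fin d) (Fin d) ℂ →+ ℝ where
  toFun A := ((A * ρ).trace).re
  map_zero' := by simp
  map_add' A B := by simp [add_mul]

lemma map_push {M N : Type*} [AddCommMonoid M] [AddCommMonoid N] (φ : M →+ N)
    {X Z : Type} (f : X → Z) (Δ : X → M) (hΔ : (Function.support Δ).Finite) (z : Z) :
    φ (push f Δ z) = push f (fun x => φ (Δ x)) z := by
  unfold push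
  classical
  rw [φ.map_finsum (hΔ.subset ?_)]
  · apply finsum_congr
    intro x
    rw [finsum_eq_if, finsum_eq_if, apply_ite φ, map_zero]
  · intro x hx
    simp only [Function.mem_support] at hx ⊢
    intro h0
    apply hx
    rw [finsum_eq_if] at hx ⊢
    split <;> simp [h0]

lemma qdist_to_pdist {d : ℕ} {X : Type} {ρ : Matrix (Fin d) (Fin d) ℂ}
    (hρ : IsDensity ρ) {Δ : X → Matrix (Fin d) (Fin d) ℂ} (hΔ : IsQDist Δ) :
    IsPDist (fun x => traceRe ρ (Δ x)) := by
  obtain ⟨hfin, hpos, hsub⟩ := hΔ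
  refine ⟨hfin.subset ?_, fun x => trace_mul_re_nonneg (hpos x) hρ.1, ?_⟩
  · intro x hx
    simp only [Function.mem_support] at hx ⊢
    intro h0; exact hx (by simp [h0, traceRe])
  · rw [← (traceRe ρ).map_finsum hfin]
    have h1 : 0 ≤ (((1 - ∑ᶠ x, Δ x) * ρ).trace).re := trace_mul_re_nonneg hsub hρ.1
    have h2 : ((1 - ∑ᶠ x, Δ x) * ρ).trace = ρ.trace - ((∑ᶠ x, Δ x) * ρ).trace := by
      rw [sub_mul, one_mul, Matrix.trace_sub]
    rw [h2, hρ.2] at h1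
    simp only [Complex.sub_re, Complex.one_re] at h1
    have h3 : traceRe ρ (∑ᶠ x, Δ x) = (((∑ᶠ x, Δ x) * ρ).trace).re := rfl
    linarith [h3 ▸ h1]

/-- Kernel bisimilarity of quantum Markov chains is preserved by instantiation:
if `x` and `y` are kernel bisimilar in `(X, c)` and `(Y, d)`, then for every
density operator `ρ` they are kernel bisimilar in `(X, c_ρ)` and `(Y, d_ρ)`. -/
theorem stmt10 (d : ℕ) {X Y : Type} (c : X → X → Matrix (Fin d) (Fin d) ℂ)
    (dY : Y → Y → Matrix (Fin d) (Fin d) ℂ)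
    (hc : IsQMC c) (hd : IsQMC dY) (x : X) (y : Y)
    (h : QKernelBisim c dY x y) :
    ∀ ρ : Matrix (Fin d) (Fin d) ℂ, IsDensity ρ →
      PKernelBisim (instMC ρ c) (instMC ρ dY) x y := by
  intro ρ hρ
  obtain ⟨Z, e, m₁, m₂, he, h1, h2, hxy⟩ := h
  refine ⟨Z, instMC ρ e, m₁, m₂, ?_, ?_, ?_, hxy⟩
  · intro z
    exact qdist_to_pdist hρ (he z)
  · intro x'
    funext z
    have : instMC ρ e (m₁ x') z = traceRe ρ (push m₁ (c x') z) := by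
      rw [← h1 x']; rfl
    rw [this, map_push (traceRe ρ) m₁ (c x') (hc x').1 z]
    rfl
  · intro y'
    funext z
    have : instMC ρ e (m₂ y') z = traceRe ρ (push m₂ (dY y') z) := by
      rw [← h2 y']; rfl
    rw [this, map_push (traceRe ρ) m₂ (dY y') (hd y').1 z]
    rfl
end

section
/- Let (X, c) and (Y, d) be probabilistic Markov chains. If states x : X and y : Y are kernel bisimilar, then they are AM-bisimilar. (Kernel and AM bisimilarity coincide for probabilistic systems because the effect algebra [0,1] is decomposable.) -/
/-- `R ⊆ X × Y` is an AM-bisimulation between the probabilistic Markov chains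
`(X, c)` and `(Y, d)` if there is a probabilistic Markov chain structure on `R`
making the two projections homomorphisms. -/
def IsPAMBisim {X Y : Type} (c : X → X → ℝ) (dY : Y → Y → ℝ) (R : Set (X × Y)) : Prop :=
  ∃ e : R → R → ℝ, IsPMC e ∧
    (∀ r : R, c r.1.1 = push (fun r' : R => r'.1.1) (e r)) ∧
    (∀ r : R, dY r.1.2 = push (fun r' : R => r'.1.2) (e r))

/-- AM-bisimilarity of states of two probabilistic Markov chains. -/
def PAMBisimilar {X Y : Type} (c : X → X → ℝ) (dY : Y → Y → ℝ) (x : X) (y : Y) : Prop :=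
  ∃ R : Set (X × Y), IsPAMBisim c dY R ∧ (x, y) ∈ R

open Function Set


lemma push_eq_sum_s12 {X Z : Type} [DecidableEq Z] (f : X → Z) (g : X → ℝ)
    (hg : (support g).Finite) (z : Z) :
    push f g z = ∑ x ∈ hg.toFinset.filter (fun x => f x = z), g x := by
  have h0 : push f g z = ∑ᶠ x ∈ {x | f x = z}, g x := rfl
  rw [h0, ← finsum_mem_coe_finset]
  refine finsum_mem_inter_support_eq g _ _ ?_
  ext a
  simp only [Set.mem_inter_iff, Set.mem_setOf_eq, Finset.coe_filter,
    Set.Finite.mem_toFinset, Function.mem_support]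
  tauto

lemma push_total {X Z : Type} (f : X → Z) (g : X → ℝ) (hg : (support g).Finite) :
    ∑ᶠ z, push f g z = ∑ᶠ x, g x := by
  classical
  rw [finsum_congr (push_eq_sum_s12 f g hg),
    finsum_eq_sum_of_support_subset _
      (hg.toFinset.support_of_fiberwise_sum_subset_image g f),
    Finset.sum_fiberwise_of_maps_to (fun x hx => Finset.mem_image_of_mem f hx),
    finsum_eq_sum g hg]

lemma le_push {X Z : Type} (f : X → Z) (g : X → ℝ) (hg : (support g).Finite)
    (h0 : ∀ x, 0 ≤ g x) (x : X) : g x ≤ push f g (f x) := by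
  classical
  rw [push_eq_sum_s12 f g hg]
  by_cases hx : g x = 0
  · rw [hx]; exact Finset.sum_nonneg fun i _ => h0 i
  · exact Finset.single_le_sum (fun i _ => h0 i)
      (by simp [Set.Finite.mem_toFinset, Function.mem_support, hx])

lemma push_zero_of {X Z : Type} (f : X → Z) (g : X → ℝ) (hg : (support g).Finite)
    (h0 : ∀ x, 0 ≤ g x) (x : X) (hz : push f g (f x) = 0) : g x = 0 :=
  le_antisymm (hz ▸ le_push f g hg h0 x) (h0 x)

lemma push_eq_finsum_ite {X Z : Type} [DecidableEq Z] (f : X → Z) (g : X → ℝ) (z : Z) :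
    push f g z = ∑ᶠ x, if f x = z then g x else 0 :=
  finsum_congr fun _ => finsum_eq_if

/-- For probabilistic Markov chains, kernel bisimilar states are AM-bisimilar
(since the effect algebra `[0,1]` is decomposable). -/
theorem stmt12 {X Y : Type} (c : X → X → ℝ) (dY : Y → Y → ℝ)
    (hc : IsPMC c) (hd : IsPMC dY) (x : X) (y : Y)
    (h : PKernelBisim c dY x y) :
    PAMBisimilar c dY x y := by
  classical
  obtain ⟨Z, e, m₁, m₂, he, h1, h2, hxy⟩ := h
  set R : Set (X × Y) := {p | m₁ p.1 = m₂ p.2} with hRdef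
  refine ⟨R, ?_, hxy⟩
  set w : X × Y → X × Y → ℝ := fun p q =>
    if m₁ q.1 = m₂ q.2 then c p.1 q.1 * dY p.2 q.2 / e (m₁ p.1) (m₁ q.1) else 0 with hw
  have hwnn : ∀ p q, 0 ≤ w p q := by
    intro p q
    simp only [hw]
    split
    · exact div_nonneg (mul_nonneg ((hc p.1).2.1 _) ((hd p.2).2.1 _)) ((he _).2.1 _)
    · exact le_refl 0
  have hwsupp : ∀ p : X × Y, support (w p) ⊆ (support (c p.1)) ×ˢ (support (dY p.2)) := by
    intro p q hq
    simp only [mem_support, hw] at hq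
    refine Set.mem_prod.2 ⟨?_, ?_⟩ <;> simp only [mem_support] <;> intro h0 <;> apply hq
    · split <;> simp [h0]
    · split <;> simp [h0]
  have hwfin : ∀ p, (support (w p)).Finite :=
    fun p => (((hc p.1).1.prod (hd p.2).1)).subset (hwsupp p)
  set eR : R → R → ℝ := fun r r' => w r.1 r'.1 with heR
  have heRfin : ∀ r : R, (support (eR r)).Finite := by
    intro r
    have : support (eR r) ⊆ Subtype.val ⁻¹' (support (w r.1)) := by
      intro r' hr'; exact hr'
    exact ((hwfin r.1).preimage (Subtype.val_injective.injOn)).subset this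
  -- key computation, first projection
  have key1 : ∀ (r : R) (x' : X), push (fun r' : R => r'.1.1) (eR r) x' = c r.1.1 x' := by
    rintro ⟨⟨x0, y0⟩, hr⟩ x'
    have hr' : m₁ x0 = m₂ y0 := hr
    set f : X × Y → ℝ := fun q => if q.1 = x' then w (x0, y0) q else 0 with hf
    have hfsupp : support f ⊆ support (w (x0, y0)) := by
      intro q hq
      simp only [mem_support, hf] at hq ⊢
      intro h0; apply hq; split <;> simp [h0]
    have hffin : (support f).Finite := (hwfin (x0, y0)).subset hfsupp
    have s1 : push (fun r' : R => r'.1.1) (eR ⟨(x0, y0), hr⟩) x' = ∑ᶠ r' : R, f r'.1 :=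
      finsum_congr fun r' => finsum_eq_if
    have s2 : ∑ᶠ r' : R, f r'.1 = ∑ᶠ q ∈ R, f q := finsum_set_coe_eq_finsum_mem R
    have s3 : ∑ᶠ q ∈ R, f q = ∑ᶠ q, f q := by
      rw [← finsum_mem_univ f]
      refine finsum_mem_inter_support_eq' f R univ fun q hq => ?_
      simp only [mem_support, hf] at hq
      have : m₁ q.1 = m₂ q.2 := by
        by_contra hcon
        apply hq; split <;> simp [hw, hcon]
      simp [hRdef, this]
    have s4 : ∑ᶠ q, f q = ∑ᶠ a, ∑ᶠ b, f (a, b) := finsum_curry f hffin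
    have s5 : ∑ᶠ a, (∑ᶠ b, f (a, b)) = ∑ᶠ b, f (x', b) := by
      refine finsum_eq_single _ x' fun a ha => ?_
      refine finsum_eq_zero_of_forall_eq_zero fun b => ?_
      simp [hf, ha]
    set E : ℝ := e (m₁ x0) (m₁ x') with hE
    have s6 : ∀ b, f (x', b) = (c x0 x' / E) * (if m₂ b = m₁ x' then dY y0 b else 0) := by
      intro b
      simp only [hf, hw, if_pos rfl]
      by_cases hb : m₁ x' = m₂ b
      · rw [if_pos hb, if_pos hb.symm, mul_div_right_comm]
      · rw [if_neg hb, if_neg (Ne.symm hb), mul_zero]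
    have hgfin : (support fun b => if m₂ b = m₁ x' then dY y0 b else 0).Finite := by
      refine (hd y0).1.subset fun b hb => ?_
      simp only [mem_support] at hb ⊢
      intro h0; apply hb; split <;> simp [h0]
    have s7 : ∑ᶠ b, f (x', b) = (c x0 x' / E) * ∑ᶠ b, (if m₂ b = m₁ x' then dY y0 b else 0) := by
      rw [finsum_congr s6, ← mul_finsum _ _]
    have s8 : ∑ᶠ b, (if m₂ b = m₁ x' then dY y0 b else 0) = E := by
      rw [← push_eq_finsum_ite m₂ (dY y0) (m₁ x'), ← h2 y0, hE, hr']
    rw [s1, s2, s3, s4, s5, s7, s8]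
    by_cases hE0 : E = 0
    · rw [hE0, mul_zero]
      have : push m₁ (c x0) (m₁ x') = 0 := by rw [← h1 x0, ← hE]; exact hE0
      exact (push_zero_of m₁ (c x0) (hc x0).1 (hc x0).2.1 x' this).symm
    · rw [div_mul_cancel₀ _ hE0]
  -- key computation, second projection
  have key2 : ∀ (r : R) (y' : Y), push (fun r' : R => r'.1.2) (eR r) y' = dY r.1.2 y' := by
    rintro ⟨⟨x0, y0⟩, hr⟩ y'
    have hr' : m₁ x0 = m₂ y0 := hr
    set f : X × Y → ℝ := fun q => if q.2 = y' then w (x0, y0) q else 0 with hf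
    have hfsupp : support f ⊆ support (w (x0, y0)) := by
      intro q hq
      simp only [mem_support, hf] at hq ⊢
      intro h0; apply hq; split <;> simp [h0]
    have hffin : (support f).Finite := (hwfin (x0, y0)).subset hfsupp
    have s1 : push (fun r' : R => r'.1.2) (eR ⟨(x0, y0), hr⟩) y' = ∑ᶠ r' : R, f r'.1 :=
      finsum_congr fun r' => finsum_eq_if
    have s2 : ∑ᶠ r' : R, f r'.1 = ∑ᶠ q ∈ R, f q := finsum_set_coe_eq_finsum_mem R
    have s3 : ∑ᶠ q ∈ R, f q = ∑ᶠ q, f q := by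
      rw [← finsum_mem_univ f]
      refine finsum_mem_inter_support_eq' f R univ fun q hq => ?_
      simp only [mem_support, hf] at hq
      have : m₁ q.1 = m₂ q.2 := by
        by_contra hcon
        apply hq; split <;> simp [hw, hcon]
      simp [hRdef, this]
    have s4 : ∑ᶠ q, f q = ∑ᶠ b, ∑ᶠ a, f (a, b) := by
      have hswap : ∑ᶠ q : X × Y, f q = ∑ᶠ i : Y × X, f (i.2, i.1) :=
        (finsum_comp_equiv (Equiv.prodComm Y X) (f := f)).symm
      have hF : (support fun i : Y × X => f (i.2, i.1)).Finite := by
        refine (hffin.image (Equiv.prodComm X Y)).subset fun i hi => ?_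
        exact ⟨(i.2, i.1), hi, rfl⟩
      rw [hswap, finsum_curry _ hF]
    have s5 : ∑ᶠ b, (∑ᶠ a, f (a, b)) = ∑ᶠ a, f (a, y') := by
      refine finsum_eq_single _ y' fun b hb => ?_
      refine finsum_eq_zero_of_forall_eq_zero fun a => ?_
      simp [hf, hb]
    set E : ℝ := e (m₁ x0) (m₂ y') with hE
    have s6 : ∀ a, f (a, y') = (dY y0 y' / E) * (if m₁ a = m₂ y' then c x0 a else 0) := by
      intro a
      simp only [hf, hw, if_pos rfl]
      by_cases ha : m₁ a = m₂ y'
      · rw [if_pos ha, if_pos ha, ha, mul_comm (c x0 a), mul_div_right_comm]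
      · rw [if_neg ha, if_neg ha, mul_zero]
    have hgfin : (support fun a => if m₁ a = m₂ y' then c x0 a else 0).Finite := by
      refine (hc x0).1.subset fun a ha => ?_
      simp only [mem_support] at ha ⊢
      intro h0; apply ha; split <;> simp [h0]
    have s7 : ∑ᶠ a, f (a, y') = (dY y0 y' / E) * ∑ᶠ a, (if m₁ a = m₂ y' then c x0 a else 0) := by
      rw [finsum_congr s6, ← mul_finsum _ _]
    have s8 : ∑ᶠ a, (if m₁ a = m₂ y' then c x0 a else 0) = E := by
      rw [← push_eq_finsum_ite m₁ (c x0) (m₂ y'), ← h1 x0, hE]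
    rw [s1, s2, s3, s4, s5, s7, s8]
    by_cases hE0 : E = 0
    · rw [hE0, mul_zero]
      have : push m₂ (dY y0) (m₂ y') = 0 := by rw [← h2 y0, ← hr', ← hE]; exact hE0
      exact (push_zero_of m₂ (dY y0) (hd y0).1 (hd y0).2.1 y' this).symm
    · rw [div_mul_cancel₀ _ hE0]
  refine ⟨eR, ?_, fun r => (funext (key1 r)).symm, fun r => (funext (key2 r)).symm⟩
  intro r
  refine ⟨heRfin r, fun r' => hwnn _ _, ?_⟩
  calc ∑ᶠ r', eR r r' = ∑ᶠ x', push (fun r' : R => r'.1.1) (eR r) x' :=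
        (push_total _ _ (heRfin r)).symm
    _ = ∑ᶠ x', c r.1.1 x' := finsum_congr (key1 r)
    _ ≤ 1 := (hc r.1.1).2.2
end

section
/- Let (X, c) and (Y, d) be quantum Markov chains on ℂ^d, and let (X, c') and (Y, d') be the corresponding function-weighted Markov chains obtained by replacing each weight L by the convex function ρ ↦ Re (Matrix.trace (L * ρ)) on density operators, i.e. c' x x' = fun ρ => Re (Matrix.trace ((c x x') * ρ)). Then states x : X and y : Y are kernel bisimilar in (X, c) and (Y, d) if and only if x and y are kernel bisimilar in (X, c') and (Y, d'). (Kernel bisimilarity of quantum Markov chains coincides with locally parameterized probabilistic bisimilarity, where the adversary may choose a different density operator at each step.) -/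
open Matrix ComplexOrder

/-- A function-weighted (sub)distribution on `X`: weights are convex,
nonnegative functions from density operators to ℝ, summing to at most 1
pointwise. -/
def IsFDist {d : ℕ} {X : Type} (Δ : X → (DOp d → ℝ)) : Prop :=
  (Function.support Δ).Finite ∧
  (∀ x, (∀ ρ : DOp d, 0 ≤ Δ x ρ) ∧
    (∀ (ρ σ : DOp d) (p : ℝ), 0 ≤ p → p ≤ 1 →
      ∀ h : IsDensity (p • ρ.1 + (1 - p) • σ.1),
        Δ x ⟨p • ρ.1 + (1 - p) • σ.1, h⟩ = p * Δ x ρ + (1 - p) * Δ x σ)) ∧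
  (∀ ρ : DOp d, ∑ᶠ x, Δ x ρ ≤ 1)

/-- A function-weighted Markov chain. -/
def IsFMC {d : ℕ} {X : Type} (c : X → X → (DOp d → ℝ)) : Prop :=
  ∀ x, IsFDist (c x)

/-- A homomorphism of function-weighted Markov chains. -/
def IsFHom {d : ℕ} {X Z : Type} (c : X → X → (DOp d → ℝ))
    (e : Z → Z → (DOp d → ℝ)) (f : X → Z) : Prop :=
  ∀ x, e (f x) = push f (c x)

/-- Kernel bisimilarity of states of two function-weighted Markov chains. -/
def FKernelBisim {d : ℕ} {X Y : Type} (c : X → X → (DOp d → ℝ))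
    (dY : Y → Y → (DOp d → ℝ)) (x : X) (y : Y) : Prop :=
  ∃ (Z : Type) (e : Z → Z → (DOp d → ℝ)) (m₁ : X → Z) (m₂ : Y → Z),
    IsFMC e ∧ IsFHom c e m₁ ∧ IsFHom dY e m₂ ∧ m₁ x = m₂ y

section Aux
variable {d : ℕ}

/-- The trace functional of a matrix as a function on density operators. -/
noncomputable def tw (L : Matrix (Fin d) (Fin d) ℂ) : DOp d → ℝ :=
  fun ρ => ((L * ρ.1).trace).re

lemma tw_zero : tw (0 : Matrix (Fin d) (Fin d) ℂ) = 0 := by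
  funext ρ; simp [tw]

lemma tw_add (A B : Matrix (Fin d) (Fin d) ℂ) : tw (A + B) = tw A + tw B := by
  funext ρ; simp [tw, add_mul, Matrix.trace_add]

noncomputable def twHom (d : ℕ) : Matrix (Fin d) (Fin d) ℂ →+ (DOp d → ℝ) where
  toFun := tw
  map_zero' := tw_zero
  map_add' := tw_add

lemma outer_psd (v : Fin d → ℂ) : (vecMulVec v (star v)).PosSemidef := by
  rw [posSemidef_iff_dotProduct_mulVec]
  constructor
  · ext i j
    simp [conjTranspose_apply, vecMulVec_apply, mul_comm]
  · intro x
    have : star x ⬝ᵥ (vecMulVec v (star v)) *ᵥ x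
        = (star x ⬝ᵥ v) * star (star x ⬝ᵥ v) := by
      simp only [dotProduct, mulVec, vecMulVec_apply, star_sum, star_mul', starRingEnd_apply]
      rw [Finset.sum_mul]
      congr 1; funext i
      rw [Finset.mul_sum, Finset.mul_sum]
      congr 1; funext j
      simp only [Pi.star_apply, starRingEnd_apply, star_star]
      ring
    rw [this, mul_comm]
    exact star_mul_self_nonneg _

lemma outer_trace (v : Fin d → ℂ) :
    (vecMulVec v (star v)).trace = ((∑ i, Complex.normSq (v i) : ℝ) : ℂ) := by
  simp only [Matrix.trace, Matrix.diag_apply, vecMulVec_apply, Pi.star_apply]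
  push_cast
  congr 1; funext i
  rw [show star (v i) = (starRingEnd ℂ) (v i) from rfl, Complex.mul_conj]

lemma trace_mul_outer (S : Matrix (Fin d) (Fin d) ℂ) (v : Fin d → ℂ) :
    (S * vecMulVec v (star v)).trace = star v ⬝ᵥ S *ᵥ v := by
  simp only [Matrix.trace, Matrix.diag_apply, Matrix.mul_apply, vecMulVec_apply,
    dotProduct, mulVec, Pi.star_apply]
  congr 1; funext i
  rw [Finset.mul_sum]
  congr 1; funext j
  ring

end Aux

section Aux2
variable {d : ℕ}

lemma psd_smul {M : Matrix (Fin d) (Fin d) ℂ} (hM : M.PosSemidef) {r : ℝ} (hr : 0 ≤ r) :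
    ((r : ℂ) • M).PosSemidef := by
  rw [posSemidef_iff_dotProduct_mulVec]
  constructor
  · ext i j
    simp only [conjTranspose_apply, Pi.smul_apply, Matrix.smul_apply, star_mul', smul_eq_mul,
      Complex.star_def, Complex.conj_ofReal]
    rw [← hM.1.apply i j]
    simp [conjTranspose_apply]
  · intro x
    rw [Matrix.smul_mulVec, dotProduct_smul, smul_eq_mul]
    exact mul_nonneg (by exact_mod_cast Complex.zero_le_real.2 hr) (hM.dotProduct_mulVec_nonneg x)

lemma outer_density (v : Fin d → ℂ) (hv : v ≠ 0) :
    IsDensity (((∑ i, Complex.normSq (v i))⁻¹ : ℝ) • vecMulVec v (star v)) := by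
  have hn : 0 < ∑ i, Complex.normSq (v i) := by
    have : ∃ i, v i ≠ 0 := by
      by_contra h
      push_neg at h
      exact hv (funext h)
    obtain ⟨i, hi⟩ := this
    exact Finset.sum_pos' (fun j _ => Complex.normSq_nonneg _)
      ⟨i, Finset.mem_univ i, Complex.normSq_pos.2 hi⟩
  constructor
  · have := psd_smul (outer_psd v) (le_of_lt (inv_pos.2 hn))
    rwa [Complex.coe_smul] at this
  · rw [show ((∑ i, Complex.normSq (v i))⁻¹ : ℝ) • vecMulVec v (star v)
      = (((∑ i, Complex.normSq (v i))⁻¹ : ℝ) : ℂ) • vecMulVec v (star v) from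
        (Complex.coe_smul _ _).symm]
    rw [Matrix.trace_smul, outer_trace, smul_eq_mul]
    rw [← Complex.ofReal_mul]
    rw [inv_mul_cancel₀ (ne_of_gt hn)]
    norm_num

lemma tw_outer (S : Matrix (Fin d) (Fin d) ℂ) (v : Fin d → ℂ) (hv : v ≠ 0) :
    ((S * (((∑ i, Complex.normSq (v i))⁻¹ : ℝ) • vecMulVec v (star v))).trace).re
      = (∑ i, Complex.normSq (v i))⁻¹ * (star v ⬝ᵥ S *ᵥ v).re := by
  rw [show ((∑ i, Complex.normSq (v i))⁻¹ : ℝ) • vecMulVec v (star v)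
      = (((∑ i, Complex.normSq (v i))⁻¹ : ℝ) : ℂ) • vecMulVec v (star v) from
        (Complex.coe_smul _ _).symm]
  rw [Matrix.mul_smul, Matrix.trace_smul, smul_eq_mul, trace_mul_outer,
    Complex.re_ofReal_mul]

lemma quadratic_zero (C : Matrix (Fin d) (Fin d) ℂ)
    (h : ∀ v : Fin d → ℂ, star v ⬝ᵥ C *ᵥ v = 0) : C = 0 := by
  classical
  have hs : ∀ (k : Fin d) (c : ℂ), star (Pi.single k c : Fin d → ℂ) = Pi.single k (star c) := by
    intro k c
    funext l
    by_cases hl : l = k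
    · subst hl; simp
    · simp [Pi.single_eq_of_ne hl]
  have base : ∀ (i j : Fin d) (a b : ℂ),
      star (Pi.single i a + Pi.single j b) ⬝ᵥ C *ᵥ (Pi.single i a + Pi.single j b)
        = star a * C i i * a + star a * C i j * b + star b * C j i * a + star b * C j j * b := by
    intro i j a b
    rw [star_add, hs, hs, add_dotProduct, mulVec_add,
      dotProduct_add, dotProduct_add]
    simp only [single_dotProduct, mulVec_single, Pi.smul_apply, col_apply,
      MulOpposite.smul_eq_mul_unop, MulOpposite.unop_op]
    ring
  have diag : ∀ i, C i i = 0 := by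
    intro i
    have := h (Pi.single i 1)
    rw [hs, single_dotProduct, mulVec_single] at this
    simpa using this
  ext i j
  rw [Matrix.zero_apply]
  by_cases hij : i = j
  · subst hij; exact diag i
  · have h1 := h (Pi.single i 1 + Pi.single j 1)
    have h2 := h (Pi.single i 1 + Pi.single j Complex.I)
    rw [base] at h1 h2
    simp only [diag i, diag j, star_one, mul_zero, zero_mul, mul_one, one_mul,
      zero_add, add_zero] at h1 h2
    have hI : (starRingEnd ℂ) Complex.I = -Complex.I := Complex.conj_I
    simp only [Complex.star_def, hI] at h2
    have hIne : Complex.I ≠ 0 := Complex.I_ne_zero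
    have h2' : Complex.I * (C i j - C j i) = 0 := by linear_combination h2
    rcases mul_eq_zero.1 h2' with hz | hz
    · exact absurd hz hIne
    · linear_combination (h1 + hz) / 2
end Aux2

section Aux3
variable {d : ℕ}

lemma herm_q_real (C : Matrix (Fin d) (Fin d) ℂ) (hC : C.IsHermitian) (v : Fin d → ℂ) :
    (starRingEnd ℂ) (star v ⬝ᵥ C *ᵥ v) = star v ⬝ᵥ C *ᵥ v := by
  rw [show (starRingEnd ℂ) (star v ⬝ᵥ C *ᵥ v) = star (star v ⬝ᵥ C *ᵥ v) from rfl]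
  conv_lhs => rw [star_dotProduct, star_star]
  rw [star_mulVec, hC, ← dotProduct_mulVec]

lemma tw_inj {A B : Matrix (Fin d) (Fin d) ℂ} (hA : A.IsHermitian) (hB : B.IsHermitian)
    (h : ∀ ρ : DOp d, ((A * ρ.1).trace).re = ((B * ρ.1).trace).re) : A = B := by
  have hC : (A - B).IsHermitian := hA.sub hB
  have key : ∀ v : Fin d → ℂ, star v ⬝ᵥ (A - B) *ᵥ v = 0 := by
    intro v
    by_cases hv : v = 0
    · simp [hv]
    · have hn : 0 < ∑ i, Complex.normSq (v i) := by
        obtain ⟨i, hi⟩ : ∃ i, v i ≠ 0 := by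
          by_contra hcon; push_neg at hcon; exact hv (funext hcon)
        exact Finset.sum_pos' (fun j _ => Complex.normSq_nonneg _)
          ⟨i, Finset.mem_univ i, Complex.normSq_pos.2 hi⟩
      set ρ : DOp d := ⟨((∑ i, Complex.normSq (v i))⁻¹ : ℝ) • vecMulVec v (star v),
        outer_density v hv⟩
      have hre : ((A - B) * ρ.1).trace.re = 0 := by
        have : ((A - B) * ρ.1).trace = (A * ρ.1).trace - (B * ρ.1).trace := by
          rw [Matrix.sub_mul, Matrix.trace_sub]
        rw [this, Complex.sub_re, h ρ, sub_self]
      have hval := tw_outer (A - B) v hv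
      rw [hre] at hval
      have hq : (star v ⬝ᵥ (A - B) *ᵥ v).re = 0 := by
        have hne : (∑ i, Complex.normSq (v i))⁻¹ ≠ 0 := inv_ne_zero (ne_of_gt hn)
        field_simp at hval
        linarith
      have him : (star v ⬝ᵥ (A - B) *ᵥ v).im = 0 := by
        have := herm_q_real (A - B) hC v
        have := Complex.conj_eq_iff_im.1 this
        exact this
      exact Complex.ext hq him
  have : A - B = 0 := quadratic_zero _ key
  exact sub_eq_zero.1 this
end Aux3

section Aux4
variable {d : ℕ}

lemma star_single (k : Fin d) (c : ℂ) :
    star (Pi.single k c : Fin d → ℂ) = Pi.single k (star c) := by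
  funext l
  by_cases hl : l = k
  · subst hl; simp
  · simp [Pi.single_eq_of_ne hl]

lemma psd_trace_nonneg {M : Matrix (Fin d) (Fin d) ℂ} (hM : M.PosSemidef) :
    0 ≤ M.trace.re := by
  have : ∀ i, 0 ≤ (M i i).re := by
    intro i
    have := hM.dotProduct_mulVec_nonneg (Pi.single i 1)
    rw [star_single, single_dotProduct, mulVec_single] at this
    simp only [one_mul, mul_one, Pi.smul_apply, col_apply, MulOpposite.smul_eq_mul_unop,
      MulOpposite.unop_op, star_one] at this
    simpa using (Complex.le_def.1 this).1
  rw [Matrix.trace, Complex.re_sum]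
  exact Finset.sum_nonneg fun i _ => this i

lemma tw_nonneg {L ρ : Matrix (Fin d) (Fin d) ℂ} (hL : L.PosSemidef) (hρ : ρ.PosSemidef) :
    0 ≤ ((L * ρ).trace).re := by
  open scoped MatrixOrder Matrix.Norms.L2Operator in
  obtain ⟨B, rfl⟩ := CStarAlgebra.nonneg_iff_eq_star_mul_self.mp hL.nonneg
  rw [Matrix.mul_assoc, Matrix.trace_mul_comm]
  exact psd_trace_nonneg (hρ.mul_mul_conjTranspose_same B)

lemma psd_finsum {X : Type} (Δ : X → Matrix (Fin d) (Fin d) ℂ)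
    (hfin : (Function.support Δ).Finite) (h : ∀ x, (Δ x).PosSemidef) :
    (∑ᶠ x, Δ x).PosSemidef := by
  classical
  rw [finsum_eq_sum Δ hfin]
  exact Finset.sum_induction _ _ (fun a b ha hb => ha.add hb) Matrix.PosSemidef.zero
    (fun x _ => h x)

lemma one_sub_psd {S : Matrix (Fin d) (Fin d) ℂ} (hS : S.PosSemidef)
    (h : ∀ ρ : DOp d, ((S * ρ.1).trace).re ≤ 1) : (1 - S).PosSemidef := by
  rw [posSemidef_iff_dotProduct_mulVec]
  constructor
  · exact (Matrix.isHermitian_one).sub hS.1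
  · intro v
    rw [Matrix.sub_mulVec, dotProduct_sub, Matrix.one_mulVec]
    by_cases hv : v = 0
    · simp [hv]
    · have hn : 0 < ∑ i, Complex.normSq (v i) := by
        obtain ⟨i, hi⟩ : ∃ i, v i ≠ 0 := by
          by_contra hcon; push_neg at hcon; exact hv (funext hcon)
        exact Finset.sum_pos' (fun j _ => Complex.normSq_nonneg _)
          ⟨i, Finset.mem_univ i, Complex.normSq_pos.2 hi⟩
      set n := ∑ i, Complex.normSq (v i) with hn_def
      have hvv : star v ⬝ᵥ v = (n : ℂ) := by
        rw [dotProduct, hn_def]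
        push_cast
        congr 1; funext i
        rw [Pi.star_apply, mul_comm, show star (v i) = (starRingEnd ℂ) (v i) from rfl,
          Complex.mul_conj]
      have hb := h ⟨(n⁻¹ : ℝ) • vecMulVec v (star v), outer_density v hv⟩
      have hval := tw_outer S v hv
      rw [← hn_def] at hval
      rw [hval] at hb
      -- hb : n⁻¹ * (star v ⬝ᵥ S *ᵥ v).re ≤ 1
      have hq := hS.dotProduct_mulVec_nonneg v
      have hqre : 0 ≤ (star v ⬝ᵥ S *ᵥ v).re := by simpa using (Complex.le_def.1 hq).1
      have hqim : (star v ⬝ᵥ S *ᵥ v).im = 0 := by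
        have := (Complex.le_def.1 hq).2
        simpa using this.symm
      have hre_le : (star v ⬝ᵥ S *ᵥ v).re ≤ n := by
        have := mul_le_mul_of_nonneg_left hb (le_of_lt hn)
        rwa [mul_one, ← mul_assoc, mul_inv_cancel₀ (ne_of_gt hn), one_mul] at this
      rw [hvv, Complex.le_def]
      constructor
      · simp only [Complex.zero_re, Complex.sub_re, Complex.ofReal_re]
        linarith
      · simp [Complex.sub_im, hqim]
end Aux4

section Aux5
open scoped Classical
variable {d : ℕ}

lemma push_apply {M : Type*} [AddCommMonoid M] {X Z : Type} (f : X → Z) (Δ : X → M) (z : Z) :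
    push f Δ z = ∑ᶠ x, if f x = z then Δ x else 0 := by
  classical
  unfold push
  exact finsum_congr fun x => finsum_eq_if

lemma cond_support {M : Type*} [AddCommMonoid M] {X Z : Type} (f : X → Z)
    (Δ : X → M) (z : Z) :
    Function.support (fun x => if f x = z then Δ x else 0) ⊆ Function.support Δ := by
  intro x hx
  simp only [Function.mem_support] at hx ⊢
  intro h0
  apply hx
  simp [h0]

lemma tw_finsum {X : Type} (Δ : X → Matrix (Fin d) (Fin d) ℂ)
    (hfin : (Function.support Δ).Finite) (ρ : DOp d) :
    tw (∑ᶠ x, Δ x) ρ = ∑ᶠ x, tw (Δ x) ρ :=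
  ((Pi.evalAddMonoidHom (fun _ : DOp d => ℝ) ρ).comp (twHom d)).map_finsum hfin

lemma tw_push {X Z : Type} (f : X → Z) (Δ : X → Matrix (Fin d) (Fin d) ℂ)
    (hfin : (Function.support Δ).Finite) (z : Z) :
    tw (push f Δ z) = push f (fun x => tw (Δ x)) z := by
  classical
  rw [push_apply, push_apply]
  have h1 : ∀ x, (if f x = z then tw (Δ x) else 0) = tw (if f x = z then Δ x else 0) := by
    intro x
    split
    · rfl
    · rw [tw_zero]
  rw [finsum_congr h1]
  have h2 := AddMonoidHom.map_finsum (twHom d) (hfin.subset (cond_support f Δ z))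
  simpa only [twHom, AddMonoidHom.coe_mk, ZeroHom.coe_mk] using h2

lemma push_support {M : Type*} [AddCommMonoid M] {X Z : Type} (f : X → Z) (Δ : X → M)
    (hfin : (Function.support Δ).Finite) :
    Function.support (push f Δ) ⊆ f '' (Function.support Δ) := by
  classical
  intro z hz
  simp only [Function.mem_support, push_apply] at hz
  by_contra hc
  apply hz
  apply finsum_eq_zero_of_forall_eq_zero
  intro x
  split
  · rename_i hfx
    by_contra hΔ
    exact hc ⟨x, by simpa [Function.mem_support] using hΔ, hfx⟩
  · rfl

lemma push_psd {X Z : Type} (f : X → Z) (Δ : X → Matrix (Fin d) (Fin d) ℂ)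
    (hfin : (Function.support Δ).Finite) (h : ∀ x, (Δ x).PosSemidef) (z : Z) :
    (push f Δ z).PosSemidef := by
  classical
  rw [push_apply]
  apply psd_finsum _ (hfin.subset (cond_support f Δ z))
  intro x
  split
  · exact h x
  · exact Matrix.PosSemidef.zero
end Aux5

section Aux6
variable {d : ℕ}

lemma tw_le_one {S : Matrix (Fin d) (Fin d) ℂ} (h1S : (1 - S).PosSemidef) (ρ : DOp d) :
    tw S ρ ≤ 1 := by
  have h0 := tw_nonneg h1S ρ.2.1
  have ht : ((1 - S) * ρ.1).trace = ρ.1.trace - (S * ρ.1).trace := by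
    rw [Matrix.sub_mul, Matrix.one_mul, Matrix.trace_sub]
  rw [ht, ρ.2.2] at h0
  simp only [Complex.sub_re, Complex.one_re] at h0
  show ((S * ρ.1).trace).re ≤ 1
  linarith
end Aux6

/-- Kernel bisimilarity of quantum Markov chains coincides with locally
parameterized probabilistic bisimilarity: bisimilarity of the Markov chains
whose weights are the convex functions `ρ ↦ Re (tr (L * ρ))`. -/
theorem stmt14 (d : ℕ) {X Y : Type} (c : X → X → Matrix (Fin d) (Fin d) ℂ)
    (dY : Y → Y → Matrix (Fin d) (Fin d) ℂ)
    (hc : IsQMC c) (hd : IsQMC dY) (x : X) (y : Y) :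
    QKernelBisim c dY x y ↔
      FKernelBisim (fun a a' => fun ρ : DOp d => ((c a a' * ρ.1).trace).re)
                   (fun b b' => fun ρ : DOp d => ((dY b b' * ρ.1).trace).re) x y := by
  classical
  constructor
  · rintro ⟨Z, e, m₁, m₂, hMC, h1, h2, heq⟩
    refine ⟨Z, fun z z' => tw (e z z'), m₁, m₂, ?_, ?_, ?_, heq⟩
    · intro z
      obtain ⟨hfin, hpsd, hsum⟩ := hMC z
      refine ⟨?_, ?_, ?_⟩
      · apply hfin.subset
        intro z' hz'
        simp only [Function.mem_support] at hz' ⊢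
        intro h0
        apply hz'
        rw [h0, tw_zero]
      · intro z'
        constructor
        · intro ρ
          exact tw_nonneg (hpsd z') ρ.2.1
        · intro ρ σ p hp0 hp1 hmix
          show (((e z z') * (p • ρ.1 + (1 - p) • σ.1)).trace).re
            = p * tw (e z z') ρ + (1 - p) * tw (e z z') σ
          rw [mul_add, Matrix.mul_smul, Matrix.mul_smul, Matrix.trace_add,
            Matrix.trace_smul, Matrix.trace_smul]
          simp only [Complex.add_re, Complex.real_smul, Complex.re_ofReal_mul]
          rfl
      · intro ρ
        have hfs : (∑ᶠ z', tw (e z z')) = 0 ∨ True := Or.inr trivial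
        show (∑ᶠ z', tw (e z z') ρ) ≤ 1
        rw [← tw_finsum (e z) hfin ρ]
        exact tw_le_one hsum ρ
    · intro a
      funext z'
      show tw (e (m₁ a) z') = push m₁ (fun a' => tw (c a a')) z'
      rw [h1 a]
      exact tw_push m₁ (c a) (hc a).1 z'
    · intro b
      funext z'
      show tw (e (m₂ b) z') = push m₂ (fun b' => tw (dY b b')) z'
      rw [h2 b]
      exact tw_push m₂ (dY b) (hd b).1 z'
  · rintro ⟨Z, e, m₁, m₂, hMC, h1, h2, heq⟩
    set eQ : Z → Z → Matrix (Fin d) (Fin d) ℂ := fun z z' =>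
      if h : ∃ L : Matrix (Fin d) (Fin d) ℂ, L.PosSemidef ∧ tw L = e z z'
      then h.choose else 0 with heQ
    have hpsd : ∀ z z', (eQ z z').PosSemidef := by
      intro z z'
      rw [heQ]
      dsimp only
      split
      · rename_i h
        exact h.choose_spec.1
      · exact Matrix.PosSemidef.zero
    have huniq : ∀ z z' (L : Matrix (Fin d) (Fin d) ℂ), L.PosSemidef → tw L = e z z' →
        eQ z z' = L := by
      intro z z' L hL htw
      have hex : ∃ L : Matrix (Fin d) (Fin d) ℂ, L.PosSemidef ∧ tw L = e z z' := ⟨L, hL, htw⟩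
      rw [heQ]
      dsimp only
      rw [dif_pos hex]
      refine tw_inj hex.choose_spec.1.1 hL.1 ?_
      intro ρ
      show tw hex.choose ρ = tw L ρ
      rw [hex.choose_spec.2, htw]
    have hzero : ∀ z z', e z z' = 0 → eQ z z' = 0 := by
      intro z z' h0
      exact huniq z z' 0 Matrix.PosSemidef.zero (tw_zero.trans h0.symm)
    have htwle : ∀ z z' (ρ : DOp d), tw (eQ z z') ρ ≤ e z z' ρ := by
      intro z z' ρ
      rw [heQ]
      dsimp only
      split
      · rename_i h
        rw [h.choose_spec.2]
      · rw [tw_zero]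
        exact ((hMC z).2.1 z').1 ρ
    refine ⟨Z, eQ, m₁, m₂, ?_, ?_, ?_, heq⟩
    · intro z
      obtain ⟨hfin, hw, hsum⟩ := hMC z
      have hsub : Function.support (eQ z) ⊆ Function.support (e z) := by
        intro z' hz'
        simp only [Function.mem_support] at hz' ⊢
        intro h0
        exact hz' (hzero z z' h0)
      refine ⟨hfin.subset hsub, hpsd z, ?_⟩
      apply one_sub_psd (psd_finsum _ (hfin.subset hsub) (hpsd z))
      intro ρ
      show tw (∑ᶠ z', eQ z z') ρ ≤ 1
      rw [tw_finsum _ (hfin.subset hsub) ρ]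
      have hsub1 : Function.support (fun z' => tw (eQ z z') ρ) ⊆ hfin.toFinset := by
        intro z' hz'
        simp only [Function.mem_support] at hz'
        rw [hfin.coe_toFinset, Function.mem_support]
        intro h0
        apply hz'
        rw [hzero z z' h0, tw_zero]
        rfl
      have hsub2 : Function.support (fun z' => e z z' ρ) ⊆ hfin.toFinset := by
        intro z' hz'
        simp only [Function.mem_support] at hz'
        rw [hfin.coe_toFinset, Function.mem_support]
        intro h0
        apply hz'
        rw [h0]
        rfl
      calc (∑ᶠ z', tw (eQ z z') ρ) = ∑ z' ∈ hfin.toFinset, tw (eQ z z') ρ :=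
            finsum_eq_sum_of_support_subset _ hsub1
        _ ≤ ∑ z' ∈ hfin.toFinset, e z z' ρ :=
            Finset.sum_le_sum fun z' _ => htwle z z' ρ
        _ = ∑ᶠ z', e z z' ρ := (finsum_eq_sum_of_support_subset _ hsub2).symm
        _ ≤ 1 := hsum ρ
    · intro a
      funext z'
      apply huniq
      · exact push_psd m₁ (c a) (hc a).1 (hc a).2.1 z'
      · rw [h1 a]
        exact tw_push m₁ (c a) (hc a).1 z'
    · intro b
      funext z'
      apply huniq
      · exact push_psd m₂ (dY b) (hd b).1 (hd b).2.1 z'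
      · rw [h2 b]
        exact tw_push m₂ (dY b) (hd b).1 z'
end

section
/- Let (X, c) and (Y, d) be quantum Markov chains on ℂ^d. A relation R ⊆ X × Y is an AM-bisimulation between (X, c) and (Y, d) if and only if for every (a, b) ∈ R there exists a finitely supported function m : X × Y → Matrix (Fin d) (Fin d) ℂ such that: every value m x y is positive semidefinite; m x y ≠ 0 implies (x, y) ∈ R; for every x : X, ∑ y, m x y = c a x; and for every y : Y, ∑ x, m x y = d b y. -/
open Matrix ComplexOrder

/-- `R ⊆ X × Y` is an AM-bisimulation between the quantum Markov chains
`(X, c)` and `(Y, d)` if there is a quantum Markov chain structure on `R`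
making the two projections homomorphisms. -/
def IsQAMBisim {d : ℕ} {X Y : Type} (c : X → X → Matrix (Fin d) (Fin d) ℂ)
    (dY : Y → Y → Matrix (Fin d) (Fin d) ℂ) (R : Set (X × Y)) : Prop :=
  ∃ e : R → R → Matrix (Fin d) (Fin d) ℂ, IsQMC e ∧
    (∀ r : R, c r.1.1 = push (fun r' : R => r'.1.1) (e r)) ∧
    (∀ r : R, dY r.1.2 = push (fun r' : R => r'.1.2) (e r))

/-- AM-bisimilarity of states of two quantum Markov chains. -/
def QAMBisimilar {d : ℕ} {X Y : Type} (c : X → X → Matrix (Fin d) (Fin d) ℂ)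
    (dY : Y → Y → Matrix (Fin d) (Fin d) ℂ) (x : X) (y : Y) : Prop :=
  ∃ R : Set (X × Y), IsQAMBisim c dY R ∧ (x, y) ∈ R

/-!
A weight function on `R` is the same thing as a weight function on `X × Y` supported in `R`
(restrict, or extend by zero), and under this correspondence the pushforwards along the two
projections of `R` are the row and column sums of the matrix-valued coupling. The remaining
condition on a quantum Markov chain structure on `R`, total mass at most `1`, is inherited from
`c (π₁ r)`, whose total mass is that of the coupling.
-/

section push

variable {M : Type*} [AddCommMonoid M] {X Y Z : Type}

lemma finsum_subtype_eq_finsum {s : Set X} {f : X → M} (hf : Function.support f ⊆ s) :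
    ∑ᶠ r : s, f r = ∑ᶠ x, f x := by
  rw [finsum_set_coe_eq_finsum_mem, ← finsum_mem_univ f]
  exact finsum_mem_inter_support_eq' f s _ fun x hx => iff_of_true (hf hx) trivial

lemma push_fst_apply (m : X × Y → M) (x : X) : push Prod.fst m x = ∑ᶠ y, m (x, y) := by
  have hfiber : {p : X × Y | p.1 = x} = Set.range (Prod.mk x) := by
    ext ⟨a, b⟩
    simp [eq_comm]
  exact (congrArg (fun s => ∑ᶠ p ∈ s, m p) hfiber).trans
    (finsum_mem_range (Prod.mk_right_injective x))

lemma push_snd_apply (m : X × Y → M) (y : Y) : push Prod.snd m y = ∑ᶠ x, m (x, y) := by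
  have hfiber : {p : X × Y | p.2 = y} = Set.range (fun x => (x, y)) := by
    ext ⟨a, b⟩
    simp [eq_comm]
  exact (congrArg (fun s => ∑ᶠ p ∈ s, m p) hfiber).trans
    (finsum_mem_range (Prod.mk_left_injective y))

lemma push_restrict {s : Set X} {m : X → M} (hm : Function.support m ⊆ s) (g : X → Z) :
    push (fun r : s => g r) (fun r : s => m r) = push g m := by
  funext z
  refine finsum_subtype_eq_finsum (f := fun x => ∑ᶠ _ : g x = z, m x) fun x hx => hm ?_
  by_contra hxm
  exact hx (by simp [Function.notMem_support.mp hxm])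

end push

section coupling

variable {d : ℕ} {X Y : Type}

def IsQCoupling (R : Set (X × Y)) (μ : X → Matrix (Fin d) (Fin d) ℂ)
    (ν : Y → Matrix (Fin d) (Fin d) ℂ) (m : X × Y → Matrix (Fin d) (Fin d) ℂ) : Prop :=
  (Function.support m).Finite ∧
  (∀ x y, (m (x, y)).PosSemidef) ∧
  (∀ x y, m (x, y) ≠ 0 → (x, y) ∈ R) ∧
  (∀ x : X, ∑ᶠ y : Y, m (x, y) = μ x) ∧
  (∀ y : Y, ∑ᶠ x : X, m (x, y) = ν y)

lemma isQCoupling_extend {R : Set (X × Y)} {Δ : R → Matrix (Fin d) (Fin d) ℂ}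
    (hfin : (Function.support Δ).Finite) (hpsd : ∀ r, (Δ r).PosSemidef) :
    IsQCoupling R (push (fun r : R => r.1.1) Δ) (push (fun r : R => r.1.2) Δ)
      (Function.extend Subtype.val Δ 0) := by
  have hval : ∀ r : R, Function.extend Subtype.val Δ 0 r = Δ r :=
    Subtype.val_injective.extend_apply Δ 0
  have hout : ∀ p ∉ R, Function.extend Subtype.val Δ 0 p = 0 := fun p hp =>
    Function.extend_apply' _ _ _ fun ⟨r, hr⟩ => hp (hr ▸ r.2)
  have hsupp : Function.support (Function.extend Subtype.val Δ 0) ⊆ R := fun p hp => by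
    by_contra hpR
    exact hp (hout p hpR)
  have hrestrict : (fun r : R => Function.extend Subtype.val Δ 0 r) = Δ := funext hval
  refine ⟨?_, fun x y => ?_, fun x y hxy => hsupp hxy, fun x => ?_, fun y => ?_⟩
  · refine (hfin.image Subtype.val).subset fun p hp => ?_
    lift p to R using hsupp hp
    exact ⟨p, by rwa [Function.mem_support, ← hval], rfl⟩
  · by_cases hxy : (x, y) ∈ R
    · exact hval ⟨(x, y), hxy⟩ ▸ hpsd _
    · exact hout _ hxy ▸ Matrix.PosSemidef.zero
  · rw [← push_fst_apply, ← push_restrict hsupp, hrestrict]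
  · rw [← push_snd_apply, ← push_restrict hsupp, hrestrict]

namespace IsQCoupling

variable {R : Set (X × Y)} {μ : X → Matrix (Fin d) (Fin d) ℂ} {ν : Y → Matrix (Fin d) (Fin d) ℂ}
  {m : X × Y → Matrix (Fin d) (Fin d) ℂ}

lemma support_subset (h : IsQCoupling R μ ν m) : Function.support m ⊆ R :=
  fun p hp => h.2.2.1 p.1 p.2 hp

lemma push_fst (h : IsQCoupling R μ ν m) : push Prod.fst m = μ :=
  funext fun x => (push_fst_apply m x).trans (h.2.2.2.1 x)

lemma push_snd (h : IsQCoupling R μ ν m) : push Prod.snd m = ν :=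
  funext fun y => (push_snd_apply m y).trans (h.2.2.2.2 y)

lemma finsum_eq (h : IsQCoupling R μ ν m) : ∑ᶠ p, m p = ∑ᶠ x, μ x := by
  rw [finsum_curry m h.1]
  exact finsum_congr h.2.2.2.1

lemma isQDist_restrict (h : IsQCoupling R μ ν m) (hμ : IsQDist μ) :
    IsQDist (fun r : R => m r) := by
  refine ⟨h.1.preimage Subtype.val_injective.injOn, fun r => h.2.1 r.1.1 r.1.2, ?_⟩
  rw [finsum_subtype_eq_finsum h.support_subset, h.finsum_eq]
  exact hμ.2.2

end IsQCoupling

end coupling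

section bisim

variable {d : ℕ} {X Y : Type} {c : X → X → Matrix (Fin d) (Fin d) ℂ}
  {dY : Y → Y → Matrix (Fin d) (Fin d) ℂ} {R : Set (X × Y)}

lemma IsQAMBisim.exists_isQCoupling (h : IsQAMBisim c dY R) {ab : X × Y} (hab : ab ∈ R) :
    ∃ m, IsQCoupling R (c ab.1) (dY ab.2) m := by
  obtain ⟨e, he, hfst, hsnd⟩ := h
  obtain ⟨hfin, hpsd, -⟩ := he ⟨ab, hab⟩
  rw [hfst ⟨ab, hab⟩, hsnd ⟨ab, hab⟩]
  exact ⟨_, isQCoupling_extend hfin hpsd⟩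

lemma isQAMBisim_of_forall_isQCoupling (hc : IsQMC c)
    (h : ∀ ab ∈ R, ∃ m, IsQCoupling R (c ab.1) (dY ab.2) m) : IsQAMBisim c dY R := by
  choose m hm using fun r : R => h r.1 r.2
  refine ⟨fun r r' => m r r', fun r => (hm r).isQDist_restrict (hc _), fun r => ?_, fun r => ?_⟩
  · exact (push_restrict (hm r).support_subset Prod.fst).trans (hm r).push_fst |>.symm
  · exact (push_restrict (hm r).support_subset Prod.snd).trans (hm r).push_snd |>.symm

end bisim

theorem stmt16_general (d : ℕ) {X Y : Type} (c : X → X → Matrix (Fin d) (Fin d) ℂ)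
    (dY : Y → Y → Matrix (Fin d) (Fin d) ℂ)
    (hc : IsQMC c) (R : Set (X × Y)) :
    IsQAMBisim c dY R ↔
      ∀ ab ∈ R, ∃ m : X × Y → Matrix (Fin d) (Fin d) ℂ,
        (Function.support m).Finite ∧
        (∀ x y, (m (x, y)).PosSemidef) ∧
        (∀ x y, m (x, y) ≠ 0 → (x, y) ∈ R) ∧
        (∀ x : X, ∑ᶠ y : Y, m (x, y) = c ab.1 x) ∧
        (∀ y : Y, ∑ᶠ x : X, m (x, y) = dY ab.2 y) :=
  ⟨fun h _ hab => h.exists_isQCoupling hab, isQAMBisim_of_forall_isQCoupling hc⟩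

/-- Matrix characterization of AM-bisimulations between quantum Markov chains:
`R` is an AM-bisimulation iff every pair in `R` admits a finitely supported
matrix-weighted coupling with positive semidefinite entries supported on `R`
whose marginals are the two given distributions. -/
theorem stmt16 (d : ℕ) {X Y : Type} (c : X → X → Matrix (Fin d) (Fin d) ℂ)
    (dY : Y → Y → Matrix (Fin d) (Fin d) ℂ)
    (hc : IsQMC c) (hd : IsQMC dY) (R : Set (X × Y)) :
    IsQAMBisim c dY R ↔
      ∀ ab ∈ R, ∃ m : X × Y → Matrix (Fin d) (Fin d) ℂ,
        (Function.support m).Finite ∧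
        (∀ x y, (m (x, y)).PosSemidef) ∧
        (∀ x y, m (x, y) ≠ 0 → (x, y) ∈ R) ∧
        (∀ x : X, ∑ᶠ y : Y, m (x, y) = c ab.1 x) ∧
        (∀ y : Y, ∑ᶠ x : X, m (x, y) = dY ab.2 y) :=
  stmt16_general d c dY hc R
end
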